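/- arXiv:1809.00996 — 9 statements merged into one kernel-verified Lean document; each statement's English description precedes it below -/
import Mathlib

section
/- For any linear rank-metric code C ⊆ F_q^{m×n} (an F_q-linear subspace of m×n matrices over F_q) with minimum rank distance δ (i.e., every nonzero matrix in C has rank at least δ, and some nonzero matrix has rank exactly δ), the dimension k of C over F_q satisfies k ≤ max(m,n) · (min(m,n) − δ + 1). -/
/-!
Keeping only a set `S` of rows is injective on `C` as soon as
`|Sᶜ| < δ`, because a matrix supported on the rows in `Sᶜ` has rank at most `|Sᶜ|`. With
`|S| = m - δ + 1` this gives `dim C ≤ (m - δ + 1) n`; transposing gives `dim C ≤ (n - δ + 1) m`,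
and the better of the two is the stated bound.
-/

open Module

namespace Matrix

variable {F ι κ : Type*} [Field F] [Fintype κ]

theorem rank_pos_of_ne_zero {A : Matrix ι κ F} (hA : A ≠ 0) : 0 < A.rank := by
  classical
  refine Nat.pos_of_ne_zero fun h => hA ?_
  rw [rank, Submodule.finrank_eq_zero, LinearMap.range_eq_bot] at h
  exact toLin'.injective (by rw [toLin'_apply', h, map_zero])

variable [Fintype ι]

theorem finrank_le_card_mul_of_card_compl_lt_rank [DecidableEq ι]
    (C : Submodule F (Matrix ι κ F)) (S : Finset ι)
    (hC : ∀ A ∈ C, A ≠ 0 → Sᶜ.card < A.rank) :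
    finrank F C ≤ S.card * Fintype.card κ := by
  let restrictRows : Matrix ι κ F →ₗ[F] Matrix S κ F := LinearMap.funLeft F (κ → F) (↑)
  have hinj : Function.Injective (restrictRows ∘ₗ C.subtype) := by
    rw [← LinearMap.ker_eq_bot, LinearMap.ker_eq_bot']
    rintro ⟨A, hA⟩ hAS
    by_contra hA0
    have hsupp : Function.support A.row ⊆ ↑Sᶜ := fun i hi => by
      by_contra hiS
      exact hi (congrFun hAS ⟨i, by simpa using hiS⟩)
    exact (hC A hA (by simpa using hA0)).not_ge (A.rank_le_card_of_support_subset _ hsupp)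
  calc finrank F C ≤ finrank F (Matrix S κ F) := LinearMap.finrank_le_finrank_of_injective hinj
    _ = S.card * Fintype.card κ := by simp [finrank_matrix]

theorem finrank_le_card_height_sub_add_one_mul {δ : ℕ} (C : Submodule F (Matrix ι κ F))
    (hC : ∀ A ∈ C, A ≠ 0 → δ ≤ A.rank) :
    finrank F C ≤ (Fintype.card ι - δ + 1) * Fintype.card κ := by
  classical
  -- The `min` only matters when `δ = 0`, where `S` must be all rows and `0 < rank A` is used.
  obtain ⟨S, -, hS⟩ := Finset.exists_subset_card_eq (s := (Finset.univ : Finset ι))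
    (n := min (Fintype.card ι) (Fintype.card ι - δ + 1)) (by simp)
  refine (finrank_le_card_mul_of_card_compl_lt_rank C S fun A hA hA0 => ?_).trans ?_
  · have := hC A hA hA0
    have := rank_pos_of_ne_zero hA0
    rw [Finset.card_compl, hS]
    omega
  · rw [hS]
    exact Nat.mul_le_mul_right _ (min_le_right _ _)

theorem finrank_le_card_width_sub_add_one_mul {δ : ℕ} (C : Submodule F (Matrix ι κ F))
    (hC : ∀ A ∈ C, A ≠ 0 → δ ≤ A.rank) :
    finrank F C ≤ (Fintype.card κ - δ + 1) * Fintype.card ι := by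
  let e := transposeLinearEquiv ι κ F F
  rw [← LinearEquiv.finrank_map_eq e C]
  refine finrank_le_card_height_sub_add_one_mul _ ?_
  rintro _ ⟨A, hA, rfl⟩ hA0
  simpa [e, rank_transpose] using hC A hA (by simpa [e] using hA0)

end Matrix

theorem stmt0_general {F : Type*} [Field F] {m n δ : ℕ}
    (C : Submodule F (Matrix (Fin m) (Fin n) F))
    (hmin : ∀ A ∈ C, A ≠ 0 → δ ≤ A.rank) :
    Module.finrank F C ≤ max m n * (min m n - δ + 1) := by
  rcases le_total m n with hmn | hnm
  · simpa [max_eq_right hmn, min_eq_left hmn, mul_comm] using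
      Matrix.finrank_le_card_height_sub_add_one_mul C hmin
  · simpa [max_eq_left hnm, min_eq_right hnm, mul_comm] using
      Matrix.finrank_le_card_width_sub_add_one_mul C hmin

/-- Singleton-like bound for linear rank-metric codes. -/
theorem stmt0 {F : Type*} [Field F] [Fintype F] {m n δ : ℕ}
    (C : Submodule F (Matrix (Fin m) (Fin n) F))
    (hmin : ∀ A ∈ C, A ≠ 0 → δ ≤ A.rank)
    (hex : ∃ A ∈ C, A ≠ 0 ∧ A.rank = δ) :
    Module.finrank F C ≤ max m n * (min m n - δ + 1) :=
  stmt0_general C hmin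
end

section
/- Let C_M be a linear MRD[m×n, δ]_q code with m ≥ n, given by a generator matrix G = (I_k | A) over F_{q^m} where k = n − δ + 1, and let 0 ≤ λ_0 ≤ λ_1 ≤ ⋯ ≤ λ_{k−1} ≤ m. Let U be the set of vectors (u_0, …, u_{k−1}) ∈ F_{q^m}^k such that the coordinate vector of each u_i with respect to a fixed ordered basis of F_{q^m} over F_q is supported on its first λ_i positions. Then C = {Ψ_m(uG) : u ∈ U} is an F_q-linear rank-metric code of dimension Σ_{i=0}^{k−1} λ_i and minimum rank distance at least δ, and each codeword Ψ_m(uG) has its i-th column (0 ≤ i ≤ k−1) supported on the first λ_i entries. -/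
/-!
The message coordinates reappear verbatim in the systematic columns of `uG`, so `u ↦ Ψ_m(uG)` is
an injective `F_q`-linear map. Hence `C` is isomorphic to `U`, which is the product of the
coordinate subspaces of `F_{q^m}` of dimensions `λ_i`, and every nonzero codeword is a nonzero
codeword of the MRD code.
-/

open Module Matrix

theorem Submodule.finrank_pi_univ {F ι : Type*} [Field F] [Fintype ι] {φ : ι → Type*}
    [∀ i, AddCommGroup (φ i)] [∀ i, Module F (φ i)] [∀ i, FiniteDimensional F (φ i)]
    (p : ∀ i, Submodule F (φ i)) :
    finrank F (Submodule.pi Set.univ p) = ∑ i, finrank F (p i) := by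
  have hrange : LinearMap.range (LinearMap.piMap fun i => (p i).subtype) =
      Submodule.pi Set.univ p := by
    ext x
    simp only [LinearMap.mem_range, LinearMap.coe_piMap, Submodule.mem_pi, Set.mem_univ,
      true_implies]
    exact ⟨by rintro ⟨y, rfl⟩ i; exact (y i).2,
      fun hx => ⟨fun i => ⟨x i, hx i⟩, rfl⟩⟩
  rw [← hrange, LinearMap.finrank_range_of_inj, Module.finrank_pi_fintype]
  exact Pi.map_injective.mpr fun i => (p i).injective_subtype

namespace Module.Basis

variable {ι F K : Type*} [Field F] [AddCommGroup K] [Module F K]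

theorem finrank_comap_repr_supported (b : Basis ι F K) (s : Set ι) [Fintype s] :
    finrank F ((Finsupp.supported F F s).comap b.repr.toLinearMap) = Fintype.card s := by
  rw [Submodule.comap_equiv_eq_map_symm, LinearEquiv.finrank_map_eq,
    (Finsupp.supportedEquivFinsupp s).finrank_eq, Module.finrank_finsupp_self]

variable {m : ℕ}

noncomputable def supportedBelow (b : Basis (Fin m) F K) (l : ℕ) : Submodule F K :=
  (Finsupp.supported F F {r : Fin m | (r : ℕ) < l}).comap b.repr.toLinearMap

theorem mem_supportedBelow {b : Basis (Fin m) F K} {l : ℕ} {x : K} :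
    x ∈ b.supportedBelow l ↔ ∀ r : Fin m, l ≤ r → b.repr x r = 0 := by
  simp only [supportedBelow, Submodule.mem_comap, Finsupp.mem_supported', Set.mem_ofPred_eq,
    not_lt]
  rfl

theorem finrank_supportedBelow (b : Basis (Fin m) F K) {l : ℕ} (hl : l ≤ m) :
    finrank F (b.supportedBelow l) = l := by
  rw [supportedBelow, finrank_comap_repr_supported, Fintype.card_subtype]
  simp only [Set.mem_ofPred_eq]
  rw [Fin.card_filter_val_lt, min_eq_right hl]

variable [Finite ι]

/-- The map `Ψ_m`, expanding each entry of a vector into a column of coordinates. -/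
noncomputable def toMatrixLinearEquiv (b : Basis ι F K) (ι' : Type*) :
    (ι' → K) ≃ₗ[F] Matrix ι ι' F :=
  (LinearEquiv.piCongrRight fun _ => b.equivFun).trans (Matrix.transposeLinearEquiv ι' ι F F)

end Module.Basis

theorem Matrix.vecMul_comp_castLE_of_submatrix_eq_one {R : Type*} [NonAssocSemiring R]
    {k n : ℕ} (hkn : k ≤ n) {G : Matrix (Fin k) (Fin n) R}
    (hG : G.submatrix id (Fin.castLE hkn) = 1)
    (u : Fin k → R) : (u ᵥ* G) ∘ Fin.castLE hkn = u := by
  calc (u ᵥ* G) ∘ Fin.castLE hkn = u ᵥ* G.submatrix id (Fin.castLE hkn) := rfl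
    _ = u := by rw [hG, vecMul_one]

theorem stmt3_general {F K : Type*} [Field F] [Field K] [Algebra F K] {m n δ k : ℕ}
    (hkn : k ≤ n)
    (β : Module.Basis (Fin m) F K)
    (G : Matrix (Fin k) (Fin n) K)
    (hsys : ∀ (i : Fin k) (j : Fin n), (j : ℕ) < k →
      G i j = if (i : ℕ) = (j : ℕ) then 1 else 0)
    (hMRD : ∀ u : Fin k → K, u ≠ 0 →
      δ ≤ (Matrix.of fun (i : Fin m) (j : Fin n) =>
        β.repr (Matrix.vecMul u G j) i).rank)
    (lam : Fin k → ℕ) (hlam : ∀ i, lam i ≤ m)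
    (U : Set (Fin k → K))
    (hU : U = {u | ∀ (i : Fin k) (r : Fin m), lam i ≤ (r : ℕ) → β.repr (u i) r = 0}) :
    ∃ C : Submodule F (Matrix (Fin m) (Fin n) F),
      (C : Set (Matrix (Fin m) (Fin n) F))
        = (fun u : Fin k → K => Matrix.of fun (i : Fin m) (j : Fin n) =>
            β.repr (Matrix.vecMul u G j) i) '' U ∧
      Module.finrank F C = ∑ i, lam i ∧
      (∀ A ∈ C, A ≠ 0 → δ ≤ A.rank) ∧
      (∀ u ∈ U, ∀ (i : Fin k) (r : Fin m), lam i ≤ (r : ℕ) →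
        (Matrix.of fun (i' : Fin m) (j : Fin n) =>
          β.repr (Matrix.vecMul u G j) i') r (Fin.castLE hkn i) = 0) := by
  have : FiniteDimensional F K := Module.Finite.of_basis β
  have hG : G.submatrix id (Fin.castLE hkn) = 1 := by
    ext i j
    rw [submatrix_apply, id, hsys i _ (by simp), one_apply]
    simp [Fin.ext_iff]
  have hmsg := vecMul_comp_castLE_of_submatrix_eq_one hkn hG
  set P := Submodule.pi Set.univ fun i => β.supportedBelow (lam i)
  have hUP : U = P := by
    ext u
    simp [hU, P, Basis.mem_supportedBelow]
  let encode : (Fin k → K) →ₗ[F] Matrix (Fin m) (Fin n) F :=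
    (β.toMatrixLinearEquiv (Fin n)).toLinearMap ∘ₗ G.vecMulLinear.restrictScalars F
  have hinj : Function.Injective encode :=
    (β.toMatrixLinearEquiv _).injective.comp
      (Function.LeftInverse.injective (g := (· ∘ Fin.castLE hkn)) hmsg)
  refine ⟨P.map encode, by rw [Submodule.map_coe, hUP]; rfl, ?_, ?_, ?_⟩
  · rw [← (Submodule.equivMapOfInjective encode hinj P).finrank_eq, Submodule.finrank_pi_univ]
    exact Finset.sum_congr rfl fun i _ => β.finrank_supportedBelow (hlam i)
  · rintro _ ⟨u, -, rfl⟩ hu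
    exact hMRD u (by rintro rfl; exact hu (map_zero encode))
  · intro u hu i r hr
    rw [hU] at hu
    show β.repr ((u ᵥ* G) (Fin.castLE hkn i)) r = 0
    rw [← Function.comp_apply (f := u ᵥ* G), hmsg]
    exact hu i r hr

/-- Subcodes of a systematic MRD code restricted on the supports of the message
coordinates give Ferrers-diagram rank-metric codes (Lemma 2.5 / Lemma 3.1 of [lf]). -/
theorem stmt3 {F K : Type*} [Field F] [Field K] [Algebra F K] {m n δ k : ℕ}
    (hmn : n ≤ m) (hδ1 : 1 ≤ δ) (hδn : δ ≤ n) (hk : k = n - δ + 1) (hkn : k ≤ n)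
    (β : Module.Basis (Fin m) F K)
    (G : Matrix (Fin k) (Fin n) K)
    (hsys : ∀ (i : Fin k) (j : Fin n), (j : ℕ) < k →
      G i j = if (i : ℕ) = (j : ℕ) then 1 else 0)
    (hMRD : ∀ u : Fin k → K, u ≠ 0 →
      δ ≤ (Matrix.of fun (i : Fin m) (j : Fin n) =>
        β.repr (Matrix.vecMul u G j) i).rank)
    (lam : Fin k → ℕ) (hmono : Monotone lam) (hlam : ∀ i, lam i ≤ m)
    (U : Set (Fin k → K))
    (hU : U = {u | ∀ (i : Fin k) (r : Fin m), lam i ≤ (r : ℕ) → β.repr (u i) r = 0}) :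
    ∃ C : Submodule F (Matrix (Fin m) (Fin n) F),
      (C : Set (Matrix (Fin m) (Fin n) F))
        = (fun u : Fin k → K => Matrix.of fun (i : Fin m) (j : Fin n) =>
            β.repr (Matrix.vecMul u G j) i) '' U ∧
      Module.finrank F C = ∑ i, lam i ∧
      (∀ A ∈ C, A ≠ 0 → δ ≤ A.rank) ∧
      (∀ u ∈ U, ∀ (i : Fin k) (r : Fin m), lam i ≤ (r : ℕ) →
        (Matrix.of fun (i' : Fin m) (j : Fin n) =>
          β.repr (Matrix.vecMul u G j) i') r (Fin.castLE hkn i) = 0) :=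
  stmt3_general hkn β G hsys hMRD lam hlam U hU
end

section
/- Let p be a prime, q a power of p, and let Π_m : F_{q^m} → F_q^{m×m} be the injective ring homomorphism sending a primitive element α to the companion matrix G of a primitive polynomial g(x) of degree m over F_q (so Π_m(0) = 0 and Π_m(α^i) = G^i). For any matrix A ∈ F_{q^m}^{s×t}, let Π_m(A) ∈ F_q^{ms×mt} be the block matrix obtained by replacing each entry A(i,j) with the m×m block Π_m(A(i,j)). If rank(A) ≥ δ over F_{q^m}, then rank(Π_m(A)) ≥ m·δ over F_q. -/
open scoped Matrix
/-- Lemma 3.2: block expansion via a field embedding of F_{q^m} into m×m matrices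
over F_q multiplies rank lower bounds by m. -/
theorem stmt6 {F K : Type*} [Field F] [Fintype F] [Field K] [Fintype K]
    {p lq m : ℕ} (hp : p.Prime) (hlq : 1 ≤ lq)
    (hq : Fintype.card F = p ^ lq)
    (hK : Fintype.card K = Fintype.card F ^ m)
    (π : K →+* Matrix (Fin m) (Fin m) F) (hinj : Function.Injective π)
    {s t δ : ℕ} (A : Matrix (Fin s) (Fin t) K)
    (hA : δ ≤ A.rank) :
    m * δ ≤ (Matrix.of fun (i : Fin s × Fin m) (j : Fin t × Fin m) =>
      π (A i.1 j.1) i.2 j.2).rank := by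
  rcases Nat.eq_zero_or_pos m with hm | hm
  · simp [hm]
  set B : Matrix (Fin s × Fin m) (Fin t × Fin m) F :=
    Matrix.of fun (i : Fin s × Fin m) (j : Fin t × Fin m) =>
      π (A i.1 j.1) i.2 j.2 with hB
  -- a nonzero vector in F^m
  have : Nonempty (Fin m) := ⟨⟨0, hm⟩⟩
  set v0 : Fin m → F := fun _ => 1 with hv0
  have hv0ne : v0 ≠ 0 := by
    intro h
    have := congrFun h ⟨0, hm⟩
    simp [hv0] at this
  -- key cancellation: π k *ᵥ v0 = 0 → k = 0
  have hker : ∀ k : K, π k *ᵥ v0 = 0 → k = 0 := by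
    intro k hk
    by_contra h
    have : v0 = 0 := by
      have h1 : π k⁻¹ *ᵥ (π k *ᵥ v0) = v0 := by
        rw [Matrix.mulVec_mulVec, ← map_mul, inv_mul_cancel₀ h, map_one,
          Matrix.one_mulVec]
      rw [hk, Matrix.mulVec_zero] at h1
      exact h1.symm
    exact hv0ne this
  -- the ranges
  set U : Submodule K (Fin s → K) := LinearMap.range A.mulVecLin with hU
  set W : Submodule F (Fin s × Fin m → F) := LinearMap.range B.mulVecLin with hW
  -- the embedding Φ
  set Φ : (Fin s → K) → (Fin s × Fin m → F) :=
    fun x ia => (π (x ia.1) *ᵥ v0) ia.2 with hΦ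
  -- key computation: B *ᵥ (Ψ y) = Φ (A *ᵥ y)
  have key : ∀ y : Fin t → K,
      B *ᵥ (fun jb : Fin t × Fin m => (π (y jb.1) *ᵥ v0) jb.2) = Φ (A *ᵥ y) := by
    intro y
    funext ia
    obtain ⟨i, a⟩ := ia
    show ∑ jb : Fin t × Fin m, π (A i jb.1) a jb.2 * ((π (y jb.1) *ᵥ v0) jb.2)
        = (π ((A *ᵥ y) i) *ᵥ v0) a
    rw [Fintype.sum_prod_type]
    have step : ∀ j : Fin t, (∑ b, π (A i j) a b * (π (y j) *ᵥ v0) b)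
        = (π (A i j * y j) *ᵥ v0) a := by
      intro j
      rw [map_mul, ← Matrix.mulVec_mulVec]
      rfl
    rw [Finset.sum_congr rfl fun j _ => step j]
    have hAy : (A *ᵥ y) i = ∑ j, A i j * y j := rfl
    rw [hAy, map_sum]
    simp only [Matrix.mulVec, dotProduct, Matrix.sum_apply, Finset.sum_mul]
    rw [Finset.sum_comm]
  -- Φ maps U into W
  have hΦmem : ∀ x : Fin s → K, x ∈ U → Φ x ∈ W := by
    rintro x ⟨y, rfl⟩
    exact ⟨fun jb : Fin t × Fin m => (π (y jb.1) *ᵥ v0) jb.2, key y⟩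
  -- Φ is injective
  have hΦinj : Function.Injective Φ := by
    intro x x' h
    funext i
    by_contra hne
    have hxa : π (x i - x' i) *ᵥ v0 = 0 := by
      rw [map_sub, Matrix.sub_mulVec]
      funext a
      have := congrFun h (i, a)
      simpa [hΦ] using sub_eq_zero_of_eq this
    exact hne (sub_eq_zero.mp (hker _ hxa))
  haveI : Fintype ↥U := Fintype.ofFinite _
  haveI : Fintype ↥W := Fintype.ofFinite _
  -- cardinalities
  have hcardU : Fintype.card ↥U = Fintype.card K ^ A.rank := Module.card_eq_pow_finrank
  have hcardW : Fintype.card ↥W = Fintype.card F ^ B.rank := Module.card_eq_pow_finrank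
  have hUW : Fintype.card ↥U ≤ Fintype.card ↥W := by
    refine Fintype.card_le_of_injective (fun x => ⟨Φ x.1, hΦmem x.1 x.2⟩) ?_
    intro x x' h
    exact Subtype.ext (hΦinj (congrArg Subtype.val h))
  have hF1 : 1 < Fintype.card F := Fintype.one_lt_card
  have hK1 : 1 < Fintype.card K := Fintype.one_lt_card
  have hpow : Fintype.card F ^ (m * δ) ≤ Fintype.card F ^ B.rank := by
    calc Fintype.card F ^ (m * δ) = (Fintype.card F ^ m) ^ δ := by rw [pow_mul]
    _ = Fintype.card K ^ δ := by rw [hK]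
    _ ≤ Fintype.card K ^ A.rank := Nat.pow_le_pow_right (le_of_lt hK1) hA
    _ = Fintype.card ↥U := hcardU.symm
    _ ≤ Fintype.card ↥W := hUW
    _ = Fintype.card F ^ B.rank := hcardW
  exact (Nat.pow_le_pow_iff_right hF1).mp hpow
end

section
/- Let D be a square block matrix over a commutative ring R, with δ×δ blocks D_{ij} that are m×m matrices pairwise commuting with each other. Then det(D) (as an mδ×mδ matrix) equals the determinant of the m×m matrix obtained by formally computing the δ×δ determinant of the blocks: det(D) = det(Det_block(D)), where Det_block(D) = Σ_σ sgn(σ) Π_i D_{i,σ(i)}. -/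
open Matrix
open scoped IsMulCommutative

theorem RingHom.map_det_eq_sum_sign_smul_prod_ofFn {S A : Type*} [CommRing S] [Ring A]
    {δ : ℕ} (f : S →+* A) (M : Matrix (Fin δ) (Fin δ) S) :
    f M.det = ∑ σ : Equiv.Perm (Fin δ),
      (Equiv.Perm.sign σ : ℤ) • (List.ofFn fun i => f (M i (σ i))).prod := by
  rw [← det_transpose, det_apply, map_sum]
  refine Finset.sum_congr rfl fun σ _ => ?_
  rw [Units.smul_def, map_zsmul, ← List.prod_ofFn, map_list_prod, List.map_ofFn]
  rfl

/-- Silvester's theorem: the determinant of a block matrix with pairwise commuting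
blocks equals the determinant of the formal block determinant. -/
theorem stmt7 {R : Type*} [CommRing R] {m δ : ℕ}
    (B : Fin δ → Fin δ → Matrix (Fin m) (Fin m) R)
    (hcomm : ∀ i j k l, Commute (B i j) (B k l)) :
    (Matrix.of fun (i : Fin δ × Fin m) (j : Fin δ × Fin m) => B i.1 j.1 i.2 j.2).det
      = (∑ σ : Equiv.Perm (Fin δ),
          (Equiv.Perm.sign σ : ℤ) • (List.ofFn fun i => B i (σ i)).prod).det := by
  let S := Subring.closure (Set.range fun ij : Fin δ × Fin δ => B ij.1 ij.2)
  have : IsMulCommutative S := Subring.isMulCommutative_closure <| by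
    rintro _ ⟨⟨i, j⟩, rfl⟩ _ ⟨⟨k, l⟩, rfl⟩
    exact hcomm i j k l
  let M : Matrix (Fin δ) (Fin δ) S := of fun i j => ⟨B i j, Subring.subset_closure ⟨(i, j), rfl⟩⟩
  have h := Matrix.det_det M S.subtype
  rw [S.subtype.map_det_eq_sum_sign_smul_prod_ofFn] at h
  exact h.symm
end

section
/- Let F = [γ_0, γ_1, …, γ_{n−1}] be an m×n Ferrers diagram (1 ≤ γ_0 ≤ ⋯ ≤ γ_{n−1} = m, γ first row full). For 0 ≤ i ≤ δ−1, let v_i be the number of dots of F not contained in the first i rows nor in the rightmost δ−1−i columns. Then any F_q-linear code C of matrices supported on F in which every nonzero matrix has rank at least δ satisfies dim_{F_q}(C) ≤ min_{0 ≤ i ≤ δ−1} v_i. -/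
/-!
Fix `i < δ` and put `k = δ - 1 - i`. A matrix supported on the Ferrers diagram that vanishes
on the `v_i` dots outside the first `i` rows and the last `k` columns is supported on the union
of `i` rows and `k` columns, so its rank is at most `i + k < δ`. In the code `C` it is therefore
zero: restricting to those dots is injective on `C`, and `dim C ≤ v_i`.
-/

open Finset Module

namespace Matrix

variable {K : Type*} [Field K] {m n : Type*}

theorem finrank_le_card_of_forall_eq_zero_on (C : Submodule K (Matrix m n K))
    (S : Finset (m × n)) (h : ∀ A ∈ C, (∀ p ∈ S, A p.1 p.2 = 0) → A = 0) :
    finrank K C ≤ #S := by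
  let restrict : C →ₗ[K] (S → K) :=
    LinearMap.pi fun p => entryLinearMap K K p.1.1 p.1.2 ∘ₗ C.subtype
  have hinj : Function.Injective restrict := by
    rw [← LinearMap.ker_eq_bot, Submodule.eq_bot_iff]
    rintro ⟨A, hA⟩ hker
    exact Subtype.ext <| h A hA fun p hp => congrFun (LinearMap.mem_ker.1 hker) ⟨p, hp⟩
  simpa using LinearMap.finrank_le_finrank_of_injective hinj

variable [Fintype n]

theorem rank_add_le (A B : Matrix m n K) : (A + B).rank ≤ A.rank + B.rank := by
  rw [rank, rank, rank, mulVecLin_add]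
  exact (Submodule.finrank_mono (LinearMap.range_add_le _ _)).trans
    (Submodule.finrank_add_le_finrank_add_finrank _ _)

theorem rank_le_card_add_card_of_forall_eq_zero [Fintype m] (A : Matrix m n K) (s : Finset m)
    (t : Finset n) (h : ∀ i ∉ s, ∀ j ∉ t, A i j = 0) : A.rank ≤ #s + #t := by
  classical
  set B : Matrix m n K := of fun i j => if i ∈ s then A i j else 0
  have hB : B.rank ≤ #s := by
    refine rank_le_card_of_support_subset B s (Function.support_subset_iff'.2 fun i hi => ?_)
    ext j
    simp [B, row, show i ∉ s from hi]
  have hAB : (A - B).rank ≤ #t := by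
    rw [← rank_transpose]
    refine rank_le_card_of_support_subset _ t (Function.support_subset_iff'.2 fun j hj => ?_)
    ext i
    by_cases hi : i ∈ s <;> simp [B, row, hi, h i _ j hj]
  calc A.rank = (B + (A - B)).rank := by rw [add_sub_cancel]
    _ ≤ B.rank + (A - B).rank := rank_add_le _ _
    _ ≤ #s + #t := add_le_add hB hAB

end Matrix

theorem Fin.card_filter_sub_le_val (n k : ℕ) : #{c : Fin n | n - k ≤ c} ≤ k := by
  have := card_filter_add_card_filter_not (s := univ) (fun c : Fin n => (c : ℕ) < n - k)
  simp only [card_filter_val_lt, card_univ, Fintype.card_fin, not_lt] at this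
  omega

theorem card_dots_le_sum {m n : ℕ} (γ : ℕ → ℕ) (i : ℕ) (P : Fin n → Prop) [DecidablePred P] :
    #{p : Fin m × Fin n | i ≤ p.1 ∧ p.1 < γ p.2 ∧ P p.2} ≤ ∑ j with P j, (γ j - i) := by
  have hmaps : ∀ p ∈ ({p : Fin m × Fin n | i ≤ p.1 ∧ p.1 < γ p.2 ∧ P p.2} : Finset _),
      p.2 ∈ ({j | P j} : Finset _) := fun p hp => by simpa using (mem_filter.1 hp).2.2.2
  rw [card_eq_sum_card_fiberwise hmaps]
  refine sum_le_sum fun j _ => ?_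
  calc _ ≤ #(Ico i (γ j)) := card_le_card_of_injOn (fun p => (p.1 : ℕ))
          (fun p hp => by
            simp only [mem_coe, mem_filter, mem_univ, true_and] at hp
            simpa [← hp.2] using And.intro hp.1.1 hp.1.2.1)
          (fun p hp q hq hpq => by
            simp only [mem_coe, mem_filter, mem_univ, true_and] at hp hq
            exact Prod.ext (Fin.ext hpq) (hp.2.trans hq.2.symm))
    _ = γ j - i := Nat.card_Ico _ _

theorem finrank_le_card_dots {F : Type*} [Field F] {m n δ : ℕ} (γ : ℕ → ℕ)
    (C : Submodule F (Matrix (Fin m) (Fin n) F))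
    (hsupp : ∀ A ∈ C, ∀ (i : Fin m) (j : Fin n), γ (j : ℕ) ≤ (i : ℕ) → A i j = 0)
    (hmin : ∀ A ∈ C, A ≠ 0 → δ ≤ A.rank) {i : ℕ} (hi : i < δ) :
    finrank F C ≤ #{p : Fin m × Fin n | i ≤ p.1 ∧ p.1 < γ p.2 ∧ p.2 + (δ - 1 - i) < n} := by
  refine Matrix.finrank_le_card_of_forall_eq_zero_on C _ fun A hA hdots => ?_
  by_contra hA0
  have hcross : A.rank ≤ #{r : Fin m | r < i} + #{c : Fin n | n - (δ - 1 - i) ≤ c} := by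
    refine A.rank_le_card_add_card_of_forall_eq_zero _ _ fun r hr c hc => ?_
    simp only [mem_filter, mem_univ, true_and, not_lt, not_le] at hr hc
    by_cases hrc : r < γ c
    · exact hdots (r, c) (by simp only [mem_filter, mem_univ, true_and]; omega)
    · exact hsupp A hA r c (not_lt.1 hrc)
  have hrows := (Fin.card_filter_val_lt (n := m) (m := i)).trans_le (min_le_right _ _)
  have hcols := Fin.card_filter_sub_le_val n (δ - 1 - i)
  have := hmin A hA hA0
  omega

theorem stmt10_general {F : Type*} [Field F] {m n δ : ℕ}
    (γ : ℕ → ℕ)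
    (C : Submodule F (Matrix (Fin m) (Fin n) F))
    (hsupp : ∀ A ∈ C, ∀ (i : Fin m) (j : Fin n), γ (j : ℕ) ≤ (i : ℕ) → A i j = 0)
    (hmin : ∀ A ∈ C, A ≠ 0 → δ ≤ A.rank) :
    ∀ i < δ, Module.finrank F C ≤
      ∑ j ∈ Finset.univ.filter (fun j : Fin n => (j : ℕ) + (δ - 1 - i) < n),
        (γ (j : ℕ) - i) := by
  intro i hi
  calc finrank F C
      ≤ #{p : Fin m × Fin n | i ≤ p.1 ∧ p.1 < γ p.2 ∧ p.2 + (δ - 1 - i) < n} :=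
        finrank_le_card_dots γ C hsupp hmin hi
    _ ≤ _ := card_dots_le_sum γ i fun j => j + (δ - 1 - i) < n

/-- Etzion–Silberstein bound: dim C ≤ min_i v_i, where v_i is the number of dots of the
Ferrers diagram outside the first i rows and the rightmost δ-1-i columns. -/
theorem stmt10 {F : Type*} [Field F] [Fintype F] {m n δ : ℕ}
    (hδ1 : 1 ≤ δ) (hδn : δ ≤ n)
    (γ : ℕ → ℕ) (hmono : ∀ i j, i ≤ j → j < n → γ i ≤ γ j)
    (hγ0 : 1 ≤ γ 0) (hγlast : γ (n - 1) = m)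
    (C : Submodule F (Matrix (Fin m) (Fin n) F))
    (hsupp : ∀ A ∈ C, ∀ (i : Fin m) (j : Fin n), γ (j : ℕ) ≤ (i : ℕ) → A i j = 0)
    (hmin : ∀ A ∈ C, A ≠ 0 → δ ≤ A.rank) :
    ∀ i < δ, Module.finrank F C ≤
      ∑ j ∈ Finset.univ.filter (fun j : Fin n => (j : ℕ) + (δ - 1 - i) < n),
        (γ (j : ℕ) - i) :=
  stmt10_general γ C hsupp hmin
end

section
/- Combining construction: let C_1 be a linear code of m_1×n_1 matrices supported on Ferrers diagram F_1 with dimension k and minimum rank distance δ_1, and C_2 a linear code of m_2×n_2 matrices supported on Ferrers diagram F_2 with dimension k and minimum rank distance δ_2. Let m_3 ≥ m_1 and n_3 ≥ n_2 and form the (m_2+m_3)×(n_1+n_3) diagram F that places F_1 in the top-left, a full m_3×n_3 rectangle D in the top-right, and F_2 in the bottom-right. Then there exists a linear code of dimension k supported on F with minimum rank distance at least δ_1 + δ_2. -/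
open Module

section Aux

variable {K : Type*} [Field K]

/-- Sum over an embedding when the function vanishes off the range. -/
lemma sum_of_embed {M : Type*} [AddCommMonoid M] {a N : ℕ} (e : Fin a ↪ Fin N)
    (h : Fin N → M) (h0 : ∀ j, (∀ i, e i ≠ j) → h j = 0) :
    ∑ j, h j = ∑ i, h (e i) := by
  rw [← Finset.sum_map Finset.univ e h]
  refine (Finset.sum_subset (Finset.subset_univ _) ?_).symm
  intro x _ hx
  exact h0 x fun i hi => hx (Finset.mem_map.mpr ⟨i, Finset.mem_univ _, hi⟩)

/-- Embedding of `Fin a` into `Fin N` with offset `off`. -/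
def offEmb {a N : ℕ} (off : ℕ) (h : off + a ≤ N) : Fin a ↪ Fin N :=
  ⟨fun j => ⟨off + j, by have := j.isLt; omega⟩, fun x y hxy => by
    have : off + (x : ℕ) = off + (y : ℕ) := congrArg Fin.val hxy
    exact Fin.ext (by omega)⟩

@[simp] lemma offEmb_val {a N off : ℕ} {h : off + a ≤ N} (j : Fin a) :
    ((offEmb off h j : Fin N) : ℕ) = off + j := rfl

variable {m1 n1 m2 n2 m3 n3 : ℕ}

/-- The combined matrix `[[B1, 0],[0, B2]]` inside an `(m2+m3) × (n1+n3)` matrix: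
`B1` in the top left corner, `B2` in the bottom right corner (rows shifted by `m3`,
columns shifted by `n1 + (n3 - n2)`). -/
def bigM (m3 n3 : ℕ) (B1 : Matrix (Fin m1) (Fin n1) K) (B2 : Matrix (Fin m2) (Fin n2) K) :
    Matrix (Fin (m2 + m3)) (Fin (n1 + n3)) K :=
  Matrix.of fun i j =>
    if h : (i : ℕ) < m1 ∧ (j : ℕ) < n1 then B1 ⟨i, h.1⟩ ⟨j, h.2⟩
    else if h2 : m3 ≤ (i : ℕ) ∧ n1 + (n3 - n2) ≤ (j : ℕ) then
      B2 ⟨(i : ℕ) - m3, by have := i.isLt; omega⟩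
         ⟨(j : ℕ) - (n1 + (n3 - n2)), by have := j.isLt; omega⟩
    else 0

lemma bigM_add (A A' : Matrix (Fin m1) (Fin n1) K) (B B' : Matrix (Fin m2) (Fin n2) K) :
    bigM m3 n3 (A + A') (B + B') = bigM m3 n3 A B + bigM m3 n3 A' B' := by
  funext i j
  simp only [bigM, Matrix.of_apply, Matrix.add_apply]
  split_ifs <;> simp

lemma bigM_smul (c : K) (A : Matrix (Fin m1) (Fin n1) K) (B : Matrix (Fin m2) (Fin n2) K) :
    bigM m3 n3 (c • A) (c • B) = c • bigM m3 n3 A B := by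
  funext i j
  simp only [bigM, Matrix.of_apply, Matrix.smul_apply]
  split_ifs <;> simp

/-- Extend a vector on `Fin n1` by zero to `Fin (n1+n3)` (first coordinates). -/
def extCol1 : (Fin n1 → K) →ₗ[K] (Fin (n1 + n3) → K) where
  toFun x j := if h : (j : ℕ) < n1 then x ⟨j, h⟩ else 0
  map_add' x y := by funext j; by_cases h : (j : ℕ) < n1 <;> simp [h]
  map_smul' c x := by funext j; by_cases h : (j : ℕ) < n1 <;> simp [h]

/-- Extend a vector on `Fin n2` by zero to `Fin (n1+n3)` (last coordinates). -/
def extCol2 (hn3 : n2 ≤ n3) : (Fin n2 → K) →ₗ[K] (Fin (n1 + n3) → K) where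
  toFun x j := if h : n1 + (n3 - n2) ≤ (j : ℕ) then
      x ⟨(j : ℕ) - (n1 + (n3 - n2)), by have := j.isLt; omega⟩ else 0
  map_add' x y := by funext j; by_cases h : n1 + (n3 - n2) ≤ (j : ℕ) <;> simp [h]
  map_smul' c x := by funext j; by_cases h : n1 + (n3 - n2) ≤ (j : ℕ) <;> simp [h]

/-- Extend a vector on `Fin m1` by zero to `Fin (m2+m3)` (first coordinates). -/
def embRow1 : (Fin m1 → K) →ₗ[K] (Fin (m2 + m3) → K) where
  toFun v i := if h : (i : ℕ) < m1 then v ⟨i, h⟩ else 0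
  map_add' x y := by funext i; by_cases h : (i : ℕ) < m1 <;> simp [h]
  map_smul' c x := by funext i; by_cases h : (i : ℕ) < m1 <;> simp [h]

/-- Extend a vector on `Fin m2` by zero to `Fin (m2+m3)` (last coordinates). -/
def embRow2 : (Fin m2 → K) →ₗ[K] (Fin (m2 + m3) → K) where
  toFun v i := if h : m3 ≤ (i : ℕ) then v ⟨(i : ℕ) - m3, by have := i.isLt; omega⟩ else 0
  map_add' x y := by funext i; by_cases h : m3 ≤ (i : ℕ) <;> simp [h]
  map_smul' c x := by funext i; by_cases h : m3 ≤ (i : ℕ) <;> simp [h]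

lemma embRow1_injective (hm3 : m1 ≤ m3) :
    Function.Injective (embRow1 (K := K) (m1 := m1) (m2 := m2) (m3 := m3)) := by
  intro x y hxy
  funext i
  have hi : (i : ℕ) < m2 + m3 := by have := i.isLt; omega
  have := congrFun hxy ⟨i, hi⟩
  simpa [embRow1, i.isLt] using this

lemma embRow2_injective :
    Function.Injective (embRow2 (K := K) (m2 := m2) (m3 := m3)) := by
  intro x y hxy
  funext i
  have hi : m3 + (i : ℕ) < m2 + m3 := by have := i.isLt; omega
  have := congrFun hxy ⟨m3 + i, hi⟩
  simpa [embRow2] using this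

lemma bigM_comp_extCol1 (hm3 : m1 ≤ m3) (B1 : Matrix (Fin m1) (Fin n1) K)
    (B2 : Matrix (Fin m2) (Fin n2) K) :
    (bigM m3 n3 B1 B2).mulVecLin ∘ₗ extCol1 = embRow1 ∘ₗ B1.mulVecLin := by
  have hcast : n1 ≤ n1 + n3 := by omega
  refine LinearMap.ext fun x => ?_
  funext i
  simp only [LinearMap.comp_apply, Matrix.mulVecLin_apply, Matrix.mulVec, dotProduct]
  rw [sum_of_embed (Fin.castLEEmb hcast)]
  · by_cases hi : (i : ℕ) < m1
    · simp only [embRow1, LinearMap.coe_mk, AddHom.coe_mk, dif_pos hi]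
      refine Finset.sum_congr rfl fun jj _ => ?_
      have hc : (i : ℕ) < m1 ∧ ((Fin.castLE hcast jj : Fin (n1 + n3)) : ℕ) < n1 :=
        ⟨hi, by simpa using jj.isLt⟩
      simp only [Fin.castLEEmb_apply, bigM, Matrix.of_apply, dif_pos hc, extCol1,
        LinearMap.coe_mk, AddHom.coe_mk, Fin.coe_castLE, Fin.eta]
      simp [jj.isLt, hi]
    · simp only [embRow1, LinearMap.coe_mk, AddHom.coe_mk, dif_neg hi]
      refine Finset.sum_eq_zero fun jj _ => ?_
      have hc1 : ¬((i : ℕ) < m1 ∧ ((Fin.castLE hcast jj : Fin (n1 + n3)) : ℕ) < n1) := by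
        simp only [Fin.coe_castLE]; omega
      have hc2 : ¬(m3 ≤ (i : ℕ) ∧ n1 + (n3 - n2) ≤ ((Fin.castLE hcast jj : Fin (n1 + n3)) : ℕ)) := by
        simp only [Fin.coe_castLE]; have := jj.isLt; omega
      simp only [Fin.castLEEmb_apply, bigM, Matrix.of_apply, dif_neg hc1, dif_neg hc2, zero_mul]
  · intro j hj
    have hjn : ¬((j : ℕ) < n1) := by
      intro h
      exact hj ⟨j, h⟩ (Fin.ext (by simp))
    simp [extCol1, hjn]

lemma bigM_comp_extCol2 (hn3 : n2 ≤ n3) (B1 : Matrix (Fin m1) (Fin n1) K)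
    (B2 : Matrix (Fin m2) (Fin n2) K) :
    (bigM m3 n3 B1 B2).mulVecLin ∘ₗ extCol2 hn3 = embRow2 ∘ₗ B2.mulVecLin := by
  have hoff : n1 + (n3 - n2) + n2 ≤ n1 + n3 := by omega
  refine LinearMap.ext fun x => ?_
  funext i
  simp only [LinearMap.comp_apply, Matrix.mulVecLin_apply, Matrix.mulVec, dotProduct]
  rw [sum_of_embed (offEmb (n1 + (n3 - n2)) hoff)]
  · by_cases hi : m3 ≤ (i : ℕ)
    · simp only [embRow2, LinearMap.coe_mk, AddHom.coe_mk, dif_pos hi]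
      refine Finset.sum_congr rfl fun jj _ => ?_
      have hA : ¬((i : ℕ) < m1 ∧ n1 + (n3 - n2) + (jj : ℕ) < n1) := by omega
      have hB : m3 ≤ (i : ℕ) ∧ n1 + (n3 - n2) ≤ n1 + (n3 - n2) + (jj : ℕ) :=
        ⟨hi, Nat.le_add_right _ _⟩
      simp only [bigM, extCol2, Matrix.of_apply, LinearMap.coe_mk, AddHom.coe_mk, offEmb_val,
        dif_neg hA, dif_pos hB, dif_pos hB.2, Nat.add_sub_cancel_left, Fin.eta]
    · simp only [embRow2, LinearMap.coe_mk, AddHom.coe_mk, dif_neg hi]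
      refine Finset.sum_eq_zero fun jj _ => ?_
      have hc1 : ¬((i : ℕ) < m1 ∧ ((offEmb (n1 + (n3 - n2)) hoff jj : Fin (n1 + n3)) : ℕ) < n1) := by
        simp only [offEmb_val]; omega
      have hc2 : ¬(m3 ≤ (i : ℕ) ∧
          n1 + (n3 - n2) ≤ ((offEmb (n1 + (n3 - n2)) hoff jj : Fin (n1 + n3)) : ℕ)) := by
        simp only [offEmb_val]; omega
      simp only [bigM, Matrix.of_apply, dif_neg hc1, dif_neg hc2, zero_mul]
  · intro j hj
    have hjn : ¬(n1 + (n3 - n2) ≤ (j : ℕ)) := by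
      intro h
      have hlt : (j : ℕ) - (n1 + (n3 - n2)) < n2 := by have := j.isLt; omega
      exact hj ⟨(j : ℕ) - (n1 + (n3 - n2)), hlt⟩
        (Fin.ext (by simp only [offEmb_val, Fin.val_mk]; omega))
    simp [extCol2, hjn]

lemma rank_bigM_ge (hm3 : m1 ≤ m3) (hn3 : n2 ≤ n3)
    (B1 : Matrix (Fin m1) (Fin n1) K) (B2 : Matrix (Fin m2) (Fin n2) K) :
    B1.rank + B2.rank ≤ (bigM m3 n3 B1 B2).rank := by
  classical
  set M := bigM m3 n3 B1 B2 with hM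
  set p : Submodule K (Fin (m2 + m3) → K) := LinearMap.range (M.mulVecLin ∘ₗ extCol1) with hp
  set q : Submodule K (Fin (m2 + m3) → K) := LinearMap.range (M.mulVecLin ∘ₗ extCol2 hn3) with hq
  have hple : p ≤ LinearMap.range M.mulVecLin := by
    rw [hp]; exact LinearMap.range_comp_le_range _ _
  have hqle : q ≤ LinearMap.range M.mulVecLin := by
    rw [hq]; exact LinearMap.range_comp_le_range _ _
  have hfr_p : finrank K p = B1.rank := by
    rw [hp, bigM_comp_extCol1 hm3, LinearMap.range_comp]
    exact ((LinearMap.range B1.mulVecLin).equivMapOfInjective _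
      (embRow1_injective hm3)).finrank_eq.symm
  have hfr_q : finrank K q = B2.rank := by
    rw [hq, bigM_comp_extCol2 hn3, LinearMap.range_comp]
    exact ((LinearMap.range B2.mulVecLin).equivMapOfInjective _
      embRow2_injective).finrank_eq.symm
  have hdisj : Disjoint p q := by
    rw [Submodule.disjoint_def]
    intro v hvp hvq
    rw [hp, bigM_comp_extCol1 hm3] at hvp
    rw [hq, bigM_comp_extCol2 hn3] at hvq
    obtain ⟨x, hx⟩ := hvp
    obtain ⟨y, hy⟩ := hvq
    funext i
    by_cases hi : m3 ≤ (i : ℕ)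
    · have : ¬((i : ℕ) < m1) := by omega
      rw [← hx]; simp [embRow1, this]
    · rw [← hy]; simp [embRow2, hi]
  have hsum : finrank K p + finrank K q = finrank K (p ⊔ q : Submodule K (Fin (m2 + m3) → K)) := by
    rw [← Submodule.finrank_sup_add_finrank_inf_eq p q, hdisj.eq_bot, finrank_bot, add_zero]
  rw [← hfr_p, ← hfr_q, hsum]
  exact Submodule.finrank_mono (sup_le hple hqle)

end Aux

/-- Theorem 1.4 (combining construction): two FDRM codes of the same dimension k can
be combined into a code on the diagram [[F₁, D],[0, F₂]] with minimum distance
at least δ₁ + δ₂. -/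
theorem stmt13 {K : Type*} [Field K]
    {m1 n1 m2 n2 m3 n3 k δ1 δ2 : ℕ} (hm3 : m1 ≤ m3) (hn3 : n2 ≤ n3)
    (γ1 γ2 : ℕ → ℕ)
    (hmono1 : ∀ i j, i ≤ j → j < n1 → γ1 i ≤ γ1 j) (hγ10 : 1 ≤ γ1 0)
    (hγ1m : ∀ j, j < n1 → γ1 j ≤ m1)
    (hmono2 : ∀ i j, i ≤ j → j < n2 → γ2 i ≤ γ2 j) (hγ20 : 1 ≤ γ2 0)
    (hγ2m : ∀ j, j < n2 → γ2 j ≤ m2)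
    (C1 : Submodule K (Matrix (Fin m1) (Fin n1) K))
    (hdim1 : Module.finrank K C1 = k)
    (hsupp1 : ∀ A ∈ C1, ∀ (i : Fin m1) (j : Fin n1), γ1 (j : ℕ) ≤ (i : ℕ) → A i j = 0)
    (hmin1 : ∀ A ∈ C1, A ≠ 0 → δ1 ≤ A.rank)
    (C2 : Submodule K (Matrix (Fin m2) (Fin n2) K))
    (hdim2 : Module.finrank K C2 = k)
    (hsupp2 : ∀ A ∈ C2, ∀ (i : Fin m2) (j : Fin n2), γ2 (j : ℕ) ≤ (i : ℕ) → A i j = 0)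
    (hmin2 : ∀ A ∈ C2, A ≠ 0 → δ2 ≤ A.rank) :
    -- column cardinalities of the combined diagram F = [[F₁, D],[0, F₂]]
    ∃ C : Submodule K (Matrix (Fin (m2 + m3)) (Fin (n1 + n3)) K),
      Module.finrank K C = k ∧
      (∀ A ∈ C, ∀ (i : Fin (m2 + m3)) (j : Fin (n1 + n3)),
        (if (j : ℕ) < n1 then γ1 (j : ℕ)
         else if (j : ℕ) < n1 + (n3 - n2) then m3
         else m3 + γ2 ((j : ℕ) - n1 - (n3 - n2))) ≤ (i : ℕ) → A i j = 0) ∧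
      (∀ A ∈ C, A ≠ 0 → δ1 + δ2 ≤ A.rank) := by
  classical
  have e : C1 ≃ₗ[K] C2 := LinearEquiv.ofFinrankEq _ _ (by rw [hdim1, hdim2])
  let Φ : C1 →ₗ[K] Matrix (Fin (m2 + m3)) (Fin (n1 + n3)) K :=
    { toFun := fun v => bigM m3 n3 (v : Matrix (Fin m1) (Fin n1) K)
        ((e v : C2) : Matrix (Fin m2) (Fin n2) K)
      map_add' := fun v w => by
        rw [map_add, Submodule.coe_add, Submodule.coe_add]
        exact bigM_add _ _ _ _
      map_smul' := fun c v => by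
        rw [map_smul, SetLike.val_smul, SetLike.val_smul, RingHom.id_apply]
        exact bigM_smul c _ _ }
  have hΦ_apply : ∀ v : C1, Φ v = bigM m3 n3 (v : Matrix (Fin m1) (Fin n1) K)
      ((e v : C2) : Matrix (Fin m2) (Fin n2) K) := fun _ => rfl
  have hΦinj : Function.Injective Φ := by
    intro v w hvw
    have h0 : ∀ u : C1, Φ u = 0 → u = 0 := by
      intro u hu
      have hB : (u : Matrix (Fin m1) (Fin n1) K) = 0 := by
        funext i j
        have hi : (i : ℕ) < m2 + m3 := by have := i.isLt; omega
        have hj : (j : ℕ) < n1 + n3 := by have := j.isLt; omega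
        have := congrFun (congrFun hu ⟨i, hi⟩) ⟨j, hj⟩
        simpa [hΦ_apply, bigM, i.isLt, j.isLt] using this
      exact Subtype.ext hB
    have := h0 (v - w) (by rw [map_sub, hvw, sub_self])
    exact sub_eq_zero.mp (by exact_mod_cast this)
  refine ⟨LinearMap.range Φ, ?_, ?_, ?_⟩
  · rw [LinearMap.finrank_range_of_inj hΦinj, hdim1]
  · rintro A ⟨v, rfl⟩ i j hle
    rw [hΦ_apply]
    simp only [bigM, Matrix.of_apply]
    split_ifs with h1 h2
    · rw [if_pos h1.2] at hle
      exact hsupp1 _ v.2 ⟨i, h1.1⟩ ⟨j, h1.2⟩ hle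
    · have hj1 : ¬((j : ℕ) < n1) := by omega
      have hj2 : ¬((j : ℕ) < n1 + (n3 - n2)) := by omega
      rw [if_neg hj1, if_neg hj2] at hle
      have heq : (j : ℕ) - n1 - (n3 - n2) = (j : ℕ) - (n1 + (n3 - n2)) := by omega
      rw [heq] at hle
      exact hsupp2 _ (e v).2 ⟨(i : ℕ) - m3, by have := i.isLt; omega⟩
        ⟨(j : ℕ) - (n1 + (n3 - n2)), by have := j.isLt; omega⟩
        (show γ2 ((j : ℕ) - (n1 + (n3 - n2))) ≤ (i : ℕ) - m3 by omega)
    · rfl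
  · rintro A ⟨v, rfl⟩ hne
    have hv : v ≠ 0 := by
      rintro rfl
      exact hne (map_zero Φ)
    have hB1 : (v : Matrix (Fin m1) (Fin n1) K) ≠ 0 := by
      simpa [Submodule.coe_eq_zero] using hv
    have hev : e v ≠ 0 := fun h => hv (by simpa using e.injective (h.trans (map_zero e).symm))
    have hB2 : ((e v : C2) : Matrix (Fin m2) (Fin n2) K) ≠ 0 := by
      simpa [Submodule.coe_eq_zero] using hev
    rw [hΦ_apply]
    calc δ1 + δ2 ≤ (v : Matrix (Fin m1) (Fin n1) K).rank
          + ((e v : C2) : Matrix (Fin m2) (Fin n2) K).rank :=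
        add_le_add (hmin1 _ v.2 hB1) (hmin2 _ (e v).2 hB2)
      _ ≤ _ := rank_bigM_ge hm3 hn3 _ _
end

section
/- Let n ≥ δ ≥ 2, k = n−δ+1, and F = [γ_0, …, γ_{n−1}] an m×n Ferrers diagram such that (1) γ_k ≥ n or γ_k − k ≥ γ_i − i for all 0 ≤ i ≤ k−1, and (2) γ_{k+1} ≥ n. Then for every prime power q there exists a linear FDRM code supported on F with dimension Σ_{i=0}^{k−1} γ_i and minimum rank distance δ; this dimension attains the Etzion–Silberstein upper bound, so the code is optimal. -/
/-!
Work in `K = 𝔽_{q^D}` with `D = max n γ_{k-1}` and a power basis `1, β, …, β^{D-1}`. A codeword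
is the matrix whose column `j` holds the coordinates of `L(η_j)`, where `L(x) = ∑_{s<k} c_s x^{q^s}`
and `η_0, …, η_{n-1}` are `𝔽_q`-independent. A nonzero `L` has at most `q^{k-1}` roots, so its
kernel has dimension `< k` and every nonzero codeword has rank `≥ n - k + 1 = δ`. Since
`L ↦ (L(η_i))_{i<k}` is bijective, the values `L(η_i) ∈ span(1, …, β^{γ_i - 1})` can be prescribed
freely, which gives dimension `∑_{i<k} γ_i` and the support condition in the first `k` columns.
The points are chosen from the kernel of a Moore matrix so that `L(η_k) = -∑_{i<k} β^{k-i} L(η_i)`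
for every `L`; as multiplication by `β^a` shifts the flag `span(1, …, β^{g-1})` by `a`, condition
(1) puts column `k` in its `γ_k` rows, and by (2) the remaining columns are unconstrained.
-/

open Polynomial Module Matrix

namespace FerrersDiagramCode

section Linearized

variable (F K : Type*) [Field F] [Fintype F] [Field K] [Algebra F K] [Finite K]

local notation "σ" => FiniteField.frobeniusAlgEquivOfAlgebraic F K

theorem frob_pow_apply (s : ℕ) (x : K) : (σ ^ s) x = x ^ Fintype.card F ^ s := by
  rw [AlgEquiv.coe_pow, FiniteField.coe_frobeniusAlgEquivOfAlgebraic_iterate]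

noncomputable def linearized {N : ℕ} : (Fin N → K) →ₗ[F] K →ₗ[F] K :=
  LinearMap.mk₂ F (fun c x => ∑ s, c s * (σ ^ (s : ℕ)) x)
    (fun c d x => by simp only [Pi.add_apply, add_mul, Finset.sum_add_distrib])
    (fun a c x => by simp only [Pi.smul_apply, smul_mul_assoc, Finset.smul_sum])
    (fun c x y => by simp only [map_add, mul_add, Finset.sum_add_distrib])
    (fun a c x => by simp only [map_smul, mul_smul_comm, Finset.smul_sum])

variable {F K}

theorem linearized_apply {N : ℕ} (c : Fin N → K) (x : K) :
    linearized F K c x = ∑ s, c s * (σ ^ (s : ℕ)) x := rfl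

theorem eq_zero_of_le_ker_linearized {N : ℕ} {c : Fin N → K} {U : Submodule F K}
    (hN : N ≤ finrank F U) (hU : U ≤ LinearMap.ker (linearized F K c)) : c = 0 := by
  obtain rfl | hN0 := Nat.eq_zero_or_pos N
  · exact Subsingleton.elim _ _
  have hq : 2 ≤ Fintype.card F := Fintype.one_lt_card
  let P : K[X] := ∑ s, C (c s) * X ^ (Fintype.card F ^ (s : ℕ))
  have hP : P = 0 := by
    have := Fintype.ofFinite U
    refine eq_zero_of_natDegree_lt_card_of_eval_eq_zero P (f := ((↑) : U → K)) Subtype.val_injective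
      (fun x => ?_) ?_
    · simpa [P, eval_finsetSum, linearized_apply, frob_pow_apply] using hU x.2
    · calc P.natDegree ≤ Fintype.card F ^ (N - 1) := by
            refine natDegree_sum_le_of_forall_le _ _ fun s _ => ?_
            refine (natDegree_C_mul_X_pow_le _ _).trans ?_
            exact Nat.pow_le_pow_right (by omega) (by omega)
        _ < Fintype.card F ^ finrank F U := Nat.pow_lt_pow_right hq (by omega)
        _ = Fintype.card U := (Module.card_eq_pow_finrank).symm
  funext s
  have := congrArg (coeff · (Fintype.card F ^ (s : ℕ))) hP
  simpa [P, finsetSum_coeff, coeff_C_mul_X_pow, (Nat.pow_right_injective hq).eq_iff,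
    Fin.val_inj] using this

theorem eq_zero_of_linearized_eq_zero {N : ℕ} {ι : Type*} [Fintype ι] {w : ι → K}
    (hw : LinearIndependent F w) (hN : N ≤ Fintype.card ι) {c : Fin N → K}
    (hc : ∀ i, linearized F K c (w i) = 0) : c = 0 :=
  eq_zero_of_le_ker_linearized (U := Submodule.span F (Set.range w))
    (by rwa [finrank_span_eq_card hw]) (Submodule.span_le.2 <| by rintro _ ⟨i, rfl⟩; exact hc i)

theorem finrank_ker_linearized_lt {N : ℕ} {c : Fin N → K} (hc : c ≠ 0) :
    finrank F (LinearMap.ker (linearized F K c)) < N :=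
  lt_of_not_ge fun h => hc (eq_zero_of_le_ker_linearized h le_rfl)

theorem linearized_smul_apply {N : ℕ} (e : K) (c : Fin N → K) (x : K) :
    linearized F K (e • c) x = e * linearized F K c x := by
  simp only [linearized_apply, Pi.smul_apply, smul_eq_mul, Finset.mul_sum, mul_assoc]

theorem frob_linearized_sub_linearized {N : ℕ} (d : Fin N → K) (x : K) :
    σ (linearized F K d x) - linearized F K d x =
      linearized F K (Fin.cons 0 (σ ∘ d) - Fin.snoc d 0) x := by
  have h_cons : linearized F K (Fin.cons 0 (σ ∘ d)) x = σ (linearized F K d x) := by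
    simp only [linearized_apply, Fin.sum_univ_succ, Fin.cons_zero, Fin.cons_succ, zero_mul,
      zero_add, map_sum, map_mul, Function.comp_apply, Fin.val_succ, pow_succ', AlgEquiv.mul_apply]
  have h_snoc : linearized F K (Fin.snoc d 0) x = linearized F K d x := by
    simp only [linearized_apply, Fin.sum_univ_castSucc, Fin.snoc_castSucc, Fin.snoc_last, zero_mul,
      add_zero, Fin.val_castSucc]
  rw [map_sub, LinearMap.sub_apply, h_cons, h_snoc]

theorem eq_zero_of_frob_linearized_eq {N : ℕ} {w : Fin (N + 1) → K} (hw : LinearIndependent F w)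
    {d : Fin N → K} (hd : ∀ i, σ (linearized F K d (w i)) = linearized F K d (w i)) : d = 0 := by
  have hc := eq_zero_of_linearized_eq_zero hw (c := Fin.cons 0 (σ ∘ d) - Fin.snoc d 0) (by simp)
    fun i => by rw [← frob_linearized_sub_linearized, hd i, sub_self]
  have h (j : Fin N) : (Fin.cons 0 (σ ∘ d) : Fin (N + 1) → K) j.castSucc = d j := by
    simpa [Fin.snoc_castSucc, sub_eq_zero] using congrFun hc j.castSucc
  funext ⟨j, hj⟩
  induction j with
  | zero => exact (h ⟨0, hj⟩).symm
  | succ j ih =>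
    rw [← h, show (⟨j + 1, hj⟩ : Fin N).castSucc = (⟨j, by omega⟩ : Fin N).succ from rfl,
      Fin.cons_succ, Function.comp_apply, ih (by omega), Pi.zero_apply, map_zero]
    rfl

theorem eq_zero_of_linearized_add_mul_eq_zero {N : ℕ} {w : Fin (N + 1) → K}
    (hw : LinearIndependent F w) {d : Fin N → K} {e : K} {a : Fin (N + 1) → F} (ha : a ≠ 0)
    (h : ∀ i, linearized F K d (w i) + e * algebraMap F K (a i) = 0) : d = 0 ∧ e = 0 := by
  by_cases he : e = 0
  · exact ⟨eq_zero_of_linearized_eq_zero hw (by simp) fun i => by simpa [he] using h i, he⟩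
  refine absurd (funext fun i => ?_) ha
  have h_val (i : Fin (N + 1)) : linearized F K ((-e)⁻¹ • d) (w i) = algebraMap F K (a i) := by
    rw [linearized_smul_apply, eq_neg_of_add_eq_zero_left (h i)]
    field_simp
  have hd : (-e)⁻¹ • d = 0 :=
    eq_zero_of_frob_linearized_eq hw fun i => by rw [h_val, AlgEquiv.commutes]
  rw [smul_eq_zero, or_iff_right (inv_ne_zero (neg_ne_zero.2 he))] at hd
  simpa [hd, he] using h i

variable (F K) in
noncomputable def mooreMatrix {ι : Type*} (k : ℕ) (w : ι → K) : Matrix (Fin k) ι K :=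
  of fun j i => (σ ^ (j : ℕ)) (w i)

theorem det_cons_mooreMatrix_ne_zero {k : ℕ} {w : Fin (k + 1) → K} (hw : LinearIndependent F w)
    {a : Fin (k + 1) → F} (ha : a ≠ 0) :
    (of (vecCons (algebraMap F K ∘ a) (of.symm (mooreMatrix F K k w)))).det ≠ 0 := by
  rw [Ne, ← exists_vecMul_eq_zero_iff]
  rintro ⟨v, hv0, hv⟩
  rw [vecMul_cons, Equiv.apply_symm_apply] at hv
  have h (i : Fin (k + 1)) :
      linearized F K (vecTail v) (w i) + vecHead v * algebraMap F K (a i) = 0 := by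
    have := congrFun hv i
    simp only [Pi.add_apply, Pi.smul_apply, Function.comp_apply, smul_eq_mul, Matrix.vecMul,
      dotProduct, Matrix.of_apply, mooreMatrix, Pi.zero_apply] at this
    rw [linearized_apply, ← this, add_comm]
  obtain ⟨hd, he⟩ := eq_zero_of_linearized_add_mul_eq_zero hw ha h
  refine hv0 (funext fun i => Fin.cases he (fun j => ?_) i)
  exact congrFun hd j

theorem linearIndependent_of_mooreMatrix_mulVec_eq_zero {k : ℕ} {w : Fin (k + 1) → K}
    (hw : LinearIndependent F w) {ν : Fin (k + 1) → K} (hν0 : ν ≠ 0)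
    (hν : mooreMatrix F K k w *ᵥ ν = 0) : LinearIndependent F ν := by
  refine Fintype.linearIndependent_iff.2 fun a ha => ?_
  by_contra ha0
  refine det_cons_mooreMatrix_ne_zero hw (a := a) (fun h => ha0 (congrFun h)) ?_
  rw [← exists_mulVec_eq_zero_iff]
  refine ⟨ν, hν0, ?_⟩
  rw [cons_mulVec, Equiv.apply_symm_apply, hν, ← cons_zero_zero]
  congr 1
  simpa [dotProduct, Algebra.smul_def] using ha

theorem exists_linearIndependent_sum_mul_linearized_eq_zero {k : ℕ} {w : Fin (k + 1) → K}
    (hw : LinearIndependent F w) : ∃ μ : Fin (k + 1) → K, LinearIndependent F μ ∧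
      ∀ c : Fin k → K, ∑ i, w i * linearized F K c (μ i) = 0 := by
  obtain ⟨ν, hν, hν0⟩ := (Submodule.ne_bot_iff _).1
    ((mooreMatrix F K k w).mulVecLin.ker_ne_bot_of_finrank_lt (by simp))
  -- `ν` is orthogonal to the rows `σ^j w`; untwisting by `σ^{-(k-1)}` turns row `k - 1 - s` into
  -- the relation `∑ w_i σ^s(μ_i) = 0`
  let τ := (σ ^ (k - 1)).symm
  refine ⟨τ ∘ ν, (linearIndependent_of_mooreMatrix_mulVec_eq_zero hw hν0 hν).map'
    τ.toLinearMap (LinearMap.ker_eq_bot.2 τ.injective), fun c => ?_⟩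
  simp only [linearized_apply, Finset.mul_sum, Function.comp_apply]
  rw [Finset.sum_comm]
  refine Finset.sum_eq_zero fun s _ => ?_
  let ρ := σ ^ (k - 1 - s : ℕ)
  have hτ (x : K) : (σ ^ (s : ℕ)) (τ x) = ρ.symm x := by
    rw [AlgEquiv.eq_symm_apply, ← AlgEquiv.mul_apply, ← pow_add,
      Nat.sub_add_cancel (by omega : (s : ℕ) ≤ k - 1), AlgEquiv.apply_symm_apply]
  have hrow : ∑ i, ρ (w i) * ν i = 0 := congrFun hν ⟨k - 1 - s, by omega⟩
  calc ∑ i, w i * (c s * (σ ^ (s : ℕ)) (τ (ν i)))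
      = c s * ρ.symm (∑ i, ρ (w i) * ν i) := by
        simp only [hτ, map_sum, map_mul, AlgEquiv.symm_apply_apply, Finset.mul_sum]
        exact Finset.sum_congr rfl fun i _ => by ring
    _ = 0 := by rw [hrow, map_zero, mul_zero]

end Linearized

section LinearAlgebra

variable {F : Type*} [Field F]

theorem exists_linearIndependent_extension {V : Type*} [AddCommGroup V] [Module F V]
    [FiniteDimensional F V] {r n : ℕ} {v : Fin r → V} (hv : LinearIndependent F v) (hrn : r ≤ n)
    (hn : n ≤ finrank F V) :
    ∃ u : Fin n → V, LinearIndependent F u ∧ ∀ i, u (Fin.castLE hrn i) = v i := by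
  induction n, hrn using Nat.le_induction with
  | base => exact ⟨v, hv, fun i => rfl⟩
  | succ n hrn ih =>
    obtain ⟨u, hu, huv⟩ := ih (by omega)
    obtain ⟨x, hx⟩ := exists_linearIndependent_snoc_of_lt_finrank hu (by omega)
    exact ⟨Fin.snoc u x, hx, fun i => (Fin.snoc_castSucc (α := fun _ => V) ..).trans (huv i)⟩

theorem finrank_comap_le_of_injective {V W : Type*} [AddCommGroup V] [Module F V]
    [AddCommGroup W] [Module F W] [FiniteDimensional F W] {T : V →ₗ[F] W}
    (hT : Function.Injective T) (p : Submodule F W) : finrank F (p.comap T) ≤ finrank F p :=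
  (LinearEquiv.finrank_eq (Submodule.equivMapOfInjective T hT _)).trans_le
    (Submodule.finrank_mono (Submodule.map_comap_le T p))

end LinearAlgebra

section Flag

variable {F K : Type*} [Field F] [Field K] [Algebra F K] {D m : ℕ}

def flag (b : Basis (Fin D) F K) (g : ℕ) : Submodule F K :=
  Submodule.span F (b '' {t | (t : ℕ) < g})

theorem flag_mono (b : Basis (Fin D) F K) {g g' : ℕ} (h : g ≤ g') : flag b g ≤ flag b g' :=
  Submodule.span_mono (Set.image_mono fun _ ht => lt_of_lt_of_le ht h)

theorem flag_eq_top (b : Basis (Fin D) F K) {g : ℕ} (h : D ≤ g) : flag b g = ⊤ := by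
  have : {t : Fin D | (t : ℕ) < g} = Set.univ := Set.eq_univ_of_forall fun t => by
    simp only [Set.mem_ofPred_eq]; omega
  rw [flag, this, Set.image_univ, b.span_eq]

theorem repr_eq_zero_of_mem_flag {b : Basis (Fin D) F K} {g : ℕ} {x : K} (hx : x ∈ flag b g)
    {t : Fin D} (ht : g ≤ t) : b.repr x t = 0 := by
  by_contra h
  have : (t : ℕ) < g := b.mem_span_image.1 hx (Finsupp.mem_support_iff.2 h)
  omega

theorem finrank_flag (b : Basis (Fin D) F K) {g : ℕ} (h : g ≤ D) : finrank F (flag b g) = g := by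
  have : b '' {t | (t : ℕ) < g} = Set.range (b ∘ Fin.castLE h) := by
    ext x
    constructor
    · rintro ⟨t, ht, rfl⟩
      exact ⟨⟨t, ht⟩, rfl⟩
    · rintro ⟨t, rfl⟩
      exact ⟨Fin.castLE h t, t.2, rfl⟩
  rw [flag, this, finrank_span_eq_card (b.linearIndependent.comp _ (Fin.castLE_injective h)),
    Fintype.card_fin]

theorem mul_pow_mem_flag {b : Basis (Fin D) F K} {β : K} (hb : ∀ t, b t = β ^ (t : ℕ))
    {g : ℕ} (a : ℕ) {x : K} (hx : x ∈ flag b g) : β ^ a * x ∈ flag b (g + a) := by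
  by_cases hD : D ≤ g + a
  · simp [flag_eq_top b hD]
  refine (Submodule.span_le.2 ?_ : flag b g ≤ (flag b (g + a)).comap (LinearMap.mulLeft F _)) hx
  rintro _ ⟨t, ht, rfl⟩
  simp only [Set.mem_ofPred_eq] at ht
  refine Submodule.subset_span ⟨⟨t + a, by omega⟩, by simpa using ht, ?_⟩
  simp [hb, pow_add, mul_comm]

variable (F) in
noncomputable def coordinates (b : Basis (Fin D) F K) (hDm : D ≤ m) : K →ₗ[F] Fin m → F :=
  Finsupp.lcoeFun ∘ₗ Finsupp.lmapDomain F F (Fin.castLE hDm) ∘ₗ b.repr.toLinearMap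

theorem coordinates_injective (b : Basis (Fin D) F K) (hDm : D ≤ m) :
    Function.Injective (coordinates F b hDm) :=
  DFunLike.coe_injective.comp <| (Finsupp.mapDomain_injective (Fin.castLE_injective hDm)).comp
    b.repr.injective

theorem coordinates_eq_zero_of_mem_flag {b : Basis (Fin D) F K} (hDm : D ≤ m) {g : ℕ} {x : K}
    (hx : x ∈ flag b g) {i : Fin m} (hi : g ≤ i) : coordinates F b hDm x i = 0 := by
  by_cases hiD : (i : ℕ) < D
  · have h := Finsupp.mapDomain_apply (Fin.castLE_injective hDm) (b.repr x) ⟨i, hiD⟩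
    rw [show Fin.castLE hDm ⟨i, hiD⟩ = i from rfl] at h
    exact h.trans (repr_eq_zero_of_mem_flag hx (t := ⟨i, hiD⟩) hi)
  · exact Finsupp.mapDomain_of_notMem_range _ _ fun ⟨t, ht⟩ => hiD (ht ▸ t.2)

end Flag

section Code

variable {F K : Type*} [Field F] [Fintype F] [Field K] [Algebra F K] [Finite K] {D m n k : ℕ}

variable (F K) in
noncomputable def evalMatrix (b : Basis (Fin D) F K) (hDm : D ≤ m) (η : Fin n → K) :
    (Fin k → K) →ₗ[F] Matrix (Fin m) (Fin n) F where
  toFun c := LinearMap.toMatrix'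
    (coordinates F b hDm ∘ₗ linearized F K c ∘ₗ Fintype.linearCombination F η)
  map_add' c c' := by simp only [map_add, LinearMap.add_comp, LinearMap.comp_add]
  map_smul' a c := by
    simp only [map_smul, LinearMap.smul_comp, LinearMap.comp_smul, RingHom.id_apply]

theorem evalMatrix_apply (b : Basis (Fin D) F K) (hDm : D ≤ m) (η : Fin n → K) (c : Fin k → K)
    (i : Fin m) (j : Fin n) :
    evalMatrix F K b hDm η c i j = coordinates F b hDm (linearized F K c (η j)) i := by
  rw [evalMatrix, LinearMap.coe_mk, AddHom.coe_mk, LinearMap.toMatrix'_apply]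
  simp only [LinearMap.comp_apply, Fintype.linearCombination_apply_single, one_smul]

theorem le_rank_evalMatrix (b : Basis (Fin D) F K) (hDm : D ≤ m) {η : Fin n → K}
    (hη : LinearIndependent F η) {c : Fin k → K} (hc : c ≠ 0) :
    n + 1 - k ≤ (evalMatrix F K b hDm η c).rank := by
  let T := Fintype.linearCombination F η
  let L := linearized F K c ∘ₗ T
  have h_rank : (evalMatrix F K b hDm η c).rank = finrank F (LinearMap.range L) := by
    rw [Matrix.rank, ← Matrix.toLin'_apply', evalMatrix, LinearMap.coe_mk, AddHom.coe_mk,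
      Matrix.toLin'_toMatrix', LinearMap.range_comp]
    exact (Submodule.equivMapOfInjective _ (coordinates_injective b hDm)
      (LinearMap.range L)).finrank_eq.symm
  have h_ker : finrank F (LinearMap.ker L) < k := by
    rw [LinearMap.ker_comp]
    exact (finrank_comap_le_of_injective hη.fintypeLinearCombination_injective _).trans_lt
      (finrank_ker_linearized_lt hc)
  have := L.finrank_range_add_finrank_ker
  rw [finrank_fin_fun] at this
  omega

theorem evalMatrix_injective (b : Basis (Fin D) F K) (hDm : D ≤ m) {η : Fin n → K}
    (hη : LinearIndependent F η) (hkn : k ≤ n) :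
    Function.Injective (evalMatrix F K b hDm η (k := k)) := by
  refine (injective_iff_map_eq_zero _).2 fun c h => by_contra fun hc => ?_
  have := le_rank_evalMatrix b hDm hη hc
  rw [h, Matrix.rank_zero] at this
  omega

theorem exists_code_of_forall_mem_flag (b : Basis (Fin D) F K) (hDm : D ≤ m) {η : Fin n → K}
    (hη : LinearIndependent F η) (hkn : k ≤ n) {γ : ℕ → ℕ} (hγD : ∀ i < k, γ i ≤ D)
    (hflag : ∀ c : Fin k → K,
      (∀ i : Fin k, linearized F K c (η (Fin.castLE hkn i)) ∈ flag b (γ i)) →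
        ∀ j : Fin n, linearized F K c (η j) ∈ flag b (γ j)) :
    ∃ C : Submodule F (Matrix (Fin m) (Fin n) F),
      finrank F C = ∑ i ∈ Finset.range k, γ i ∧
      (∀ A ∈ C, ∀ (i : Fin m) (j : Fin n), γ (j : ℕ) ≤ (i : ℕ) → A i j = 0) ∧
      (∀ A ∈ C, A ≠ 0 → n + 1 - k ≤ A.rank) := by
  let E : (Fin k → K) →ₗ[F] Fin k → K :=
    LinearMap.pi fun i => (linearized F K).flip (η (Fin.castLE hkn i))
  have hE : Function.Injective E := (injective_iff_map_eq_zero _).2 fun c h =>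
    eq_zero_of_linearized_eq_zero (hη.comp _ (Fin.castLE_injective hkn)) (by simp)
      fun i => congrFun h i
  let e := LinearEquiv.ofInjectiveEndo E hE
  let Ψ := evalMatrix F K b hDm η ∘ₗ e.symm.toLinearMap ∘ₗ
    LinearMap.piMap fun i : Fin k => (flag b (γ i)).subtype
  have hΨ : Function.Injective Ψ :=
    (evalMatrix_injective b hDm hη hkn).comp <| e.symm.injective.comp <|
      Pi.map_injective.2 fun _ => Subtype.val_injective
  have h_mem : ∀ A ∈ LinearMap.range Ψ, ∃ c : Fin k → K, A = evalMatrix F K b hDm η c ∧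
      ∀ i : Fin k, linearized F K c (η (Fin.castLE hkn i)) ∈ flag b (γ i) := by
    rintro _ ⟨u, rfl⟩
    refine ⟨e.symm fun i => (u i : K), rfl, fun i => ?_⟩
    have : E (e.symm fun i => (u i : K)) = fun i => (u i : K) := e.apply_symm_apply _
    rw [show linearized F K _ _ = E _ i from rfl, this]
    exact (u i).2
  refine ⟨LinearMap.range Ψ, ?_, ?_, ?_⟩
  · rw [LinearMap.finrank_range_of_inj hΨ, Module.finrank_pi_fintype,
      ← Fin.sum_univ_eq_sum_range]
    exact Finset.sum_congr rfl fun i _ => finrank_flag b (hγD i i.2)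
  · intro A hA i j hij
    obtain ⟨c, rfl, hc⟩ := h_mem A hA
    rw [evalMatrix_apply]
    exact coordinates_eq_zero_of_mem_flag hDm (hflag c hc j) hij
  · intro A hA hA0
    obtain ⟨c, rfl, -⟩ := h_mem A hA
    exact le_rank_evalMatrix b hDm hη fun hc => hA0 (by rw [hc, map_zero])

end Code

section Construction

variable {F K : Type*} [Field F] [Fintype F] [Field K] [Algebra F K] [Finite K] {D m n k : ℕ}

theorem exists_linearIndependent_linearized_eq_neg_sum (b : Basis (Fin D) F K) {β : K}
    (hb : ∀ t, b t = β ^ (t : ℕ)) (hkn : k < n) (hnD : n ≤ D) :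
    ∃ η : Fin n → K, LinearIndependent F η ∧ ∀ c : Fin k → K,
      linearized F K c (η ⟨k, hkn⟩) =
        -∑ i : Fin k, β ^ (k - i : ℕ) * linearized F K c (η (Fin.castLE hkn.le i)) := by
  let w : Fin (k + 1) → K := fun i => β ^ (k - i : ℕ)
  have hw : LinearIndependent F w := by
    have := b.linearIndependent.comp (fun i : Fin (k + 1) => (⟨k - i, by omega⟩ : Fin D))
      fun i j h => by simp only [Fin.mk.injEq] at h; omega
    simpa [w, Function.comp_def, hb] using this
  obtain ⟨μ, hμ, hμw⟩ := exists_linearIndependent_sum_mul_linearized_eq_zero hw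
  obtain ⟨η, hη, hημ⟩ := exists_linearIndependent_extension hμ (by omega : k + 1 ≤ n)
    (by simpa [finrank_eq_card_basis b] using hnD)
  refine ⟨η, hη, fun c => ?_⟩
  have h_last : η ⟨k, hkn⟩ = μ (Fin.last k) := hημ (Fin.last k)
  have h_castSucc (i : Fin k) : η (Fin.castLE hkn.le i) = μ i.castSucc := hημ i.castSucc
  have h := hμw c
  simp only [Fin.sum_univ_castSucc, w, Fin.val_last, Nat.sub_self, pow_zero, one_mul,
    Fin.val_castSucc] at h
  simp only [h_last, h_castSucc]
  linear_combination h

theorem exists_code_of_basis_pow (b : Basis (Fin D) F K) {β : K} (hb : ∀ t, b t = β ^ (t : ℕ))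
    (hDm : D ≤ m) (hnD : n ≤ D) (hkn : k < n) {γ : ℕ → ℕ} (hγ_lt : ∀ i < k, γ i ≤ D)
    (hγ_gt : ∀ j, k < j → j < n → D ≤ γ j) (hγk : D ≤ γ k ∨ ∀ i < k, γ i + (k - i) ≤ γ k) :
    ∃ C : Submodule F (Matrix (Fin m) (Fin n) F),
      finrank F C = ∑ i ∈ Finset.range k, γ i ∧
      (∀ A ∈ C, ∀ (i : Fin m) (j : Fin n), γ (j : ℕ) ≤ (i : ℕ) → A i j = 0) ∧
      (∀ A ∈ C, A ≠ 0 → n + 1 - k ≤ A.rank) := by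
  obtain ⟨η, hη, hηk⟩ := exists_linearIndependent_linearized_eq_neg_sum b hb hkn hnD
  refine exists_code_of_forall_mem_flag b hDm hη hkn.le hγ_lt fun c hc j => ?_
  rcases lt_trichotomy (j : ℕ) k with hj | hj | hj
  · exact hc ⟨j, hj⟩
  · obtain rfl : j = ⟨k, hkn⟩ := Fin.ext hj
    rcases hγk with hγk | hγk
    · simp [flag_eq_top b hγk]
    rw [hηk]
    exact neg_mem <| Submodule.sum_mem _ fun i _ =>
      flag_mono b (hγk i i.2) (mul_pow_mem_flag hb _ (hc i))
  · simp [flag_eq_top b (hγ_gt j hj j.2)]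

end Construction

theorem exists_finrank_eq (F : Type*) [Field F] [Finite F] {D : ℕ} (hD : D ≠ 0) :
    ∃ (K : Type) (_ : Field K) (_ : Algebra F K) (_ : Finite K), finrank F K = D := by
  obtain ⟨p, _⟩ := CharP.exists F
  have : Fact p.Prime := ⟨CharP.char_is_prime F p⟩
  have : NeZero D := ⟨hD⟩
  exact ⟨_, inferInstance, inferInstance, inferInstance, FiniteField.finrank_extension F p D⟩

theorem exists_basis_pow_of_finrank_eq {F K : Type*} [Field F] [Finite F] [Field K] [Algebra F K]
    [Finite K] {D : ℕ} (hK : finrank F K = D) :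
    ∃ (β : K) (b : Basis (Fin D) F K), ∀ t, b t = β ^ (t : ℕ) := by
  have : Module.Finite F K := .of_finite
  let pb := Field.powerBasisOfFiniteOfSeparable F K
  refine ⟨pb.gen, pb.basis.reindex (finCongr (pb.finrank.symm.trans hK)), fun t => ?_⟩
  simp [PowerBasis.coe_basis]

end FerrersDiagramCode

open FerrersDiagramCode in
theorem stmt16_general {F : Type*} [Field F] [Fintype F] {m n δ k : ℕ}
    (hδ2 : 2 ≤ δ) (hδn : δ ≤ n) (hnm : n ≤ m) (hk : k = n - δ + 1)
    (γ : ℕ → ℕ) (hmono : ∀ i j, i ≤ j → j < n → γ i ≤ γ j)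
    (hγm : ∀ j, j < n → γ j ≤ m)
    (h1 : n ≤ γ k ∨ ∀ i < k, (γ i : ℤ) - (i : ℤ) ≤ (γ k : ℤ) - (k : ℤ))
    (h2 : ∀ j, k + 1 ≤ j → j < n → n ≤ γ j) :
    ∃ C : Submodule F (Matrix (Fin m) (Fin n) F),
      Module.finrank F C = ∑ i ∈ Finset.range k, γ i ∧
      (∀ A ∈ C, ∀ (i : Fin m) (j : Fin n), γ (j : ℕ) ≤ (i : ℕ) → A i j = 0) ∧
      (∀ A ∈ C, A ≠ 0 → δ ≤ A.rank) := by
  have hkn : k < n := by omega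
  obtain ⟨K, _, _, _, hK⟩ := exists_finrank_eq F (D := max n (γ (k - 1))) (by omega)
  obtain ⟨β, b, hb⟩ := exists_basis_pow_of_finrank_eq hK
  have hγk : max n (γ (k - 1)) ≤ γ k ∨ ∀ i < k, γ i + (k - i) ≤ γ k := by
    by_cases hnk : n ≤ γ k
    · exact Or.inl (max_le hnk (hmono _ _ (by omega) hkn))
    · exact Or.inr fun i hi => by have := h1.resolve_left hnk i hi; omega
  obtain ⟨C, hC_dim, hC_supp, hC_rank⟩ := exists_code_of_basis_pow (m := m) b hb
    (max_le hnm (hγm _ (by omega))) (le_max_left _ _) hkn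
    (fun i hi => (hmono i (k - 1) (by omega) (by omega)).trans (le_max_right _ _))
    (fun j hkj hj => max_le (h2 j hkj hj) (hmono _ _ (by omega) hj)) hγk
  exact ⟨C, hC_dim, hC_supp, fun A hA hA0 => by have := hC_rank A hA hA0; omega⟩

/-- Theorem 2.4: for n ≥ δ ≥ 2, k = n-δ+1, if (1) γ_k ≥ n or γ_k - k ≥ γ_i - i for all
i < k, and (2) γ_{k+1} ≥ n, then for every prime power q (any finite field F) there is
an optimal [F, Σ_{i<k} γ_i, δ]_q FDRM code. -/
theorem stmt16 {F : Type*} [Field F] [Fintype F] {m n δ k : ℕ}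
    (hδ2 : 2 ≤ δ) (hδn : δ ≤ n) (hnm : n ≤ m) (hk : k = n - δ + 1)
    (γ : ℕ → ℕ) (hmono : ∀ i j, i ≤ j → j < n → γ i ≤ γ j)
    (hγ0 : 1 ≤ γ 0) (hγm : ∀ j, j < n → γ j ≤ m)
    (h1 : n ≤ γ k ∨ ∀ i < k, (γ i : ℤ) - (i : ℤ) ≤ (γ k : ℤ) - (k : ℤ))
    (h2 : ∀ j, k + 1 ≤ j → j < n → n ≤ γ j) :
    ∃ C : Submodule F (Matrix (Fin m) (Fin n) F),
      Module.finrank F C = ∑ i ∈ Finset.range k, γ i ∧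
      (∀ A ∈ C, ∀ (i : Fin m) (j : Fin n), γ (j : ℕ) ≤ (i : ℕ) → A i j = 0) ∧
      (∀ A ∈ C, A ≠ 0 → δ ≤ A.rank) :=
  stmt16_general hδ2 hδn hnm hk γ hmono hγm h1 h2
end

section
/- Optimality transfer under matrix representation: if there exists an optimal [F, γ_0, n]_{q^m} FDRM code supported on F = [γ_0, …, γ_{n−1}] (optimal meaning its dimension γ_0 attains the Etzion–Silberstein bound with minimum rank distance equal to n, the full number of columns), then there exists an optimal [F', m γ_0, m n]_q FDRM code, where F' = [mγ_0 (repeated m times), mγ_1 (repeated m times), …, mγ_{n−1} (repeated m times)]. -/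
/-!
Writing multiplication by `x ∈ K` in an `F`-basis of `K` is an injective `F`-algebra map
`K → Matrix (Fin m) (Fin m) F`; applied entrywise it turns a `K`-matrix into an `F`-matrix of
`m × m` blocks, compatibly with matrix products. A matrix of full column rank `n` has a left
inverse, whose expansion is a left inverse of the expanded matrix, so the expansion has full
column rank `m * n`. The expansion is `F`-linear and injective, so it maps the code to an
`F`-subspace of dimension `m * γ 0`, and a zero entry becomes a zero block, which turns the
profile `γ` into the profile `j ↦ m * γ (j / m)`.
-/

/-- Block-major indexing: `(i, s) ↦ m * i + s`. -/
def finBlockEquiv (p m : ℕ) : Fin p × Fin m ≃ Fin (m * p) :=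
  finProdFinEquiv.trans (finCongr (Nat.mul_comm p m))

@[simp]
theorem finBlockEquiv_symm_fst (p m : ℕ) (x : Fin (m * p)) :
    (((finBlockEquiv p m).symm x).1 : ℕ) = x / m := by
  simp [finBlockEquiv, finProdFinEquiv]

theorem Submodule.finrank_map_restrictScalars {F K M N : Type*} [Field F] [Field K]
    [Algebra F K] [AddCommGroup M] [Module F M] [Module K M] [IsScalarTower F K M]
    [AddCommGroup N] [Module F N] (f : M →ₗ[F] N) (hf : Function.Injective f)
    (C : Submodule K M) :
    Module.finrank F ((C.restrictScalars F).map f) = Module.finrank F K * Module.finrank K C := by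
  rw [← (Submodule.equivMapOfInjective f hf _).finrank_eq,
    ((Submodule.restrictScalarsEquiv F K M C).restrictScalars F).finrank_eq,
    Module.finrank_mul_finrank]

namespace Matrix

theorem exists_mul_eq_one_of_card_le_rank {K m n : Type*} [Field K] [Fintype m] [Fintype n]
    [DecidableEq n] (A : Matrix m n K) (hA : Fintype.card n ≤ A.rank) :
    ∃ B : Matrix n m K, B * A = 1 := by
  classical
  have hker : LinearMap.ker A.mulVecLin = ⊥ := by
    have h := A.mulVecLin.finrank_range_add_finrank_ker
    rw [← Matrix.rank, Module.finrank_fintype_fun_eq_card] at h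
    exact Submodule.finrank_eq_zero.mp (by omega)
  obtain ⟨g, hg⟩ := A.mulVecLin.exists_leftInverse_of_injective hker
  refine ⟨LinearMap.toMatrix' g, ?_⟩
  rw [← LinearMap.toMatrix'_toLin' A, ← LinearMap.toMatrix'_comp, Matrix.toLin'_apply', hg,
    LinearMap.toMatrix'_id]

section ExpandByBasis

variable {R S ι m n o : Type*} [CommRing R] [CommRing S] [Algebra R S] [Fintype ι]
  [DecidableEq ι]

noncomputable def expandByBasis (b : Module.Basis ι R S) :
    Matrix m n S →ₗ[R] Matrix (m × ι) (n × ι) R :=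
  (compLinearEquiv m n ι ι R R).toLinearMap ∘ₗ (Algebra.leftMulMatrix b).toLinearMap.mapMatrix

variable (b : Module.Basis ι R S)

@[simp]
theorem expandByBasis_apply (A : Matrix m n S) (i : m) (s : ι) (j : n) (t : ι) :
    expandByBasis b A (i, s) (j, t) = Algebra.leftMulMatrix b (A i j) s t := rfl

theorem expandByBasis_mul [Fintype n] (A : Matrix m n S) (B : Matrix n o S) :
    expandByBasis b (A * B) = expandByBasis b A * expandByBasis b B := by
  ext ⟨i, s⟩ ⟨k, u⟩
  simp [Matrix.mul_apply, Fintype.sum_prod_type, Matrix.sum_apply]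

theorem expandByBasis_one [DecidableEq m] : expandByBasis b (1 : Matrix m m S) = 1 := by
  simp [expandByBasis, Matrix.map_one, comp_one]

theorem expandByBasis_injective : Function.Injective (expandByBasis b : Matrix m n S → _) :=
  (compLinearEquiv m n ι ι R R).injective.comp
    (Matrix.map_injective (Algebra.leftMulMatrix_injective b))

end ExpandByBasis

theorem card_mul_card_le_rank_expandByBasis {F K ι m n : Type*} [Field F] [Field K]
    [Algebra F K] [Fintype ι] [DecidableEq ι] [Fintype m] [Fintype n] [DecidableEq n]
    (b : Module.Basis ι F K) (A : Matrix m n K) (hA : Fintype.card n ≤ A.rank) :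
    Fintype.card n * Fintype.card ι ≤ (expandByBasis b A).rank := by
  obtain ⟨B, hBA⟩ := exists_mul_eq_one_of_card_le_rank A hA
  calc Fintype.card n * Fintype.card ι = (1 : Matrix (n × ι) (n × ι) F).rank := by
        rw [rank_one, Fintype.card_prod]
    _ = (expandByBasis b B * expandByBasis b A).rank := by
        rw [← expandByBasis_mul, hBA, expandByBasis_one]
    _ ≤ (expandByBasis b A).rank := rank_mul_le_right _ _

section ExpandByFinBasis

variable {R S : Type*} [CommRing R] [CommRing S] [Algebra R S] {m p q : ℕ}

noncomputable def expandByFinBasis (b : Module.Basis (Fin m) R S) :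
    Matrix (Fin p) (Fin q) S →ₗ[R] Matrix (Fin (m * p)) (Fin (m * q)) R :=
  (reindexLinearEquiv R R (finBlockEquiv p m) (finBlockEquiv q m)).toLinearMap ∘ₗ
    expandByBasis b

variable (b : Module.Basis (Fin m) R S)

theorem expandByFinBasis_apply (A : Matrix (Fin p) (Fin q) S) (i : Fin (m * p))
    (j : Fin (m * q)) :
    expandByFinBasis b A i j = Algebra.leftMulMatrix b
      (A ((finBlockEquiv p m).symm i).1 ((finBlockEquiv q m).symm j).1)
      ((finBlockEquiv p m).symm i).2 ((finBlockEquiv q m).symm j).2 := rfl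

theorem expandByFinBasis_injective :
    Function.Injective (expandByFinBasis b : Matrix (Fin p) (Fin q) S → _) :=
  (reindexLinearEquiv R R _ _).injective.comp (expandByBasis_injective b)

end ExpandByFinBasis

theorem mul_le_rank_expandByFinBasis {F K : Type*} [Field F] [Field K] [Algebra F K]
    {m p q : ℕ} (b : Module.Basis (Fin m) F K) (A : Matrix (Fin p) (Fin q) K)
    (hA : q ≤ A.rank) :
    m * q ≤ (expandByFinBasis b A).rank := by
  have h := card_mul_card_le_rank_expandByBasis b A (by simpa using hA)
  rw [Fintype.card_fin, Fintype.card_fin, mul_comm] at h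
  exact h.trans_eq (rank_reindex _ _ _).symm

end Matrix

theorem stmt18_general {F K : Type*} [Field F] [Field K] [Algebra F K]
    {m mr n : ℕ} (hm : Module.finrank F K = m)
    (γ : ℕ → ℕ)
    (C : Submodule K (Matrix (Fin mr) (Fin n) K))
    (hdim : Module.finrank K C = γ 0)
    (hsupp : ∀ A ∈ C, ∀ (i : Fin mr) (j : Fin n), γ (j : ℕ) ≤ (i : ℕ) → A i j = 0)
    (hmin : ∀ A ∈ C, A ≠ 0 → n ≤ A.rank) :
    ∃ C' : Submodule F (Matrix (Fin (m * mr)) (Fin (m * n)) F),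
      Module.finrank F C' = m * γ 0 ∧
      (∀ A ∈ C', ∀ (i : Fin (m * mr)) (j : Fin (m * n)),
        m * γ ((j : ℕ) / m) ≤ (i : ℕ) → A i j = 0) ∧
      (∀ A ∈ C', A ≠ 0 → m * n ≤ A.rank) := by
  rcases Nat.eq_zero_or_pos m with rfl | hm_pos
  · exact ⟨⊥, by simp, fun A hA _ _ _ => by simp [(Submodule.mem_bot F).mp hA],
      fun A hA hA0 => absurd ((Submodule.mem_bot F).mp hA) hA0⟩
  have : FiniteDimensional F K := FiniteDimensional.of_finrank_pos (hm ▸ hm_pos)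
  let b : Module.Basis (Fin m) F K := (Module.finBasis F K).reindex (finCongr hm)
  let Φ := Matrix.expandByFinBasis (p := mr) (q := n) b
  refine ⟨(C.restrictScalars F).map Φ, ?_, ?_, ?_⟩
  · rw [Submodule.finrank_map_restrictScalars Φ (Matrix.expandByFinBasis_injective b), hm, hdim]
  · rintro _ ⟨A, hA, rfl⟩ i j hij
    have hblock : γ (((finBlockEquiv n m).symm j).1 : ℕ) ≤ ((finBlockEquiv mr m).symm i).1 := by
      rw [finBlockEquiv_symm_fst, finBlockEquiv_symm_fst, Nat.le_div_iff_mul_le hm_pos]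
      linarith
    rw [Matrix.expandByFinBasis_apply, hsupp A hA _ _ hblock, map_zero, Matrix.zero_apply]
  · rintro _ ⟨A, hA, rfl⟩ hΦA
    exact Matrix.mul_le_rank_expandByFinBasis b A (hmin A hA fun h => hΦA (by simp [h]))

/-- Theorem 3.5 (optimality transfer under matrix representation): an optimal
[F, γ_0, n]_{q^m} FDRM code yields an optimal [F', mγ_0, mn]_q FDRM code, where
each column cardinality of F is repeated m times and multiplied by m. -/
theorem stmt18 {F K : Type*} [Field F] [Field K] [Algebra F K]
    {m mr n : ℕ} (hm : Module.finrank F K = m)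
    (γ : ℕ → ℕ) (hmono : ∀ i j, i ≤ j → j < n → γ i ≤ γ j)
    (hγ0 : 1 ≤ γ 0) (hγm : ∀ j, j < n → γ j ≤ mr)
    (C : Submodule K (Matrix (Fin mr) (Fin n) K))
    (hdim : Module.finrank K C = γ 0)
    (hsupp : ∀ A ∈ C, ∀ (i : Fin mr) (j : Fin n), γ (j : ℕ) ≤ (i : ℕ) → A i j = 0)
    (hmin : ∀ A ∈ C, A ≠ 0 → n ≤ A.rank) :
    ∃ C' : Submodule F (Matrix (Fin (m * mr)) (Fin (m * n)) F),
      Module.finrank F C' = m * γ 0 ∧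
      (∀ A ∈ C', ∀ (i : Fin (m * mr)) (j : Fin (m * n)),
        m * γ ((j : ℕ) / m) ≤ (i : ℕ) → A i j = 0) ∧
      (∀ A ∈ C', A ≠ 0 → m * n ≤ A.rank) :=
  stmt18_general hm γ C hdim hsupp hmin
end

section
/- Lifting MRD codes yields constant dimension codes: let C be a linear rank-metric code in F_q^{k×(n−k)} with minimum rank distance δ. Then the set { rowspace(I_k | A) : A ∈ C } ⊆ G_q(n, k) of k-dimensional subspaces of F_q^n is a constant dimension code of size |C| whose minimum subspace distance is 2δ, where d_S(U, V) = dim U + dim V − 2 dim(U ∩ V). -/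
open Matrix Module

section Aux

variable {F : Type*} [Field F] {k r : ℕ}

/-- The lift map sending `x : F^k` to `x ᵥ* (I | A)`. -/
noncomputable def liftMap (A : Matrix (Fin k) (Fin r) F) :
    (Fin k → F) →ₗ[F] (Fin k ⊕ Fin r → F) where
  toFun x := Sum.elim x (x ᵥ* A)
  map_add' x y := by
    funext s; cases s with
    | inl i => simp
    | inr j => simp [Matrix.add_vecMul]
  map_smul' c x := by
    funext s; cases s with
    | inl i => simp
    | inr j => simp [Matrix.smul_vecMul]

lemma liftMap_injective (A : Matrix (Fin k) (Fin r) F) :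
    Function.Injective (liftMap A) := by
  intro x y h
  funext i
  exact congrFun h (Sum.inl i)

lemma span_eq_range_liftMap (A : Matrix (Fin k) (Fin r) F) :
    Submodule.span F (Set.range fun i : Fin k =>
        Sum.elim (fun j => if i = j then (1 : F) else 0) (fun j => A i j)) =
      LinearMap.range (liftMap A) := by
  apply le_antisymm
  · rw [Submodule.span_le]
    rintro _ ⟨i, rfl⟩
    exact ⟨Pi.single i 1, by
      funext s; cases s with
      | inl j => simp [liftMap, Pi.single_apply, eq_comm]
      | inr j => simp [liftMap, Matrix.single_one_vecMul]⟩
  · rintro _ ⟨x, rfl⟩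
    have : liftMap A x = ∑ i : Fin k, x i •
        (Sum.elim (fun j => if i = j then (1 : F) else 0) (fun j => A i j) :
          Fin k ⊕ Fin r → F) := by
      funext s; cases s with
      | inl j => simp [liftMap, Finset.sum_apply, Pi.smul_apply, eq_comm,
          mul_ite, mul_one, mul_zero]
      | inr j => simp [liftMap, Matrix.vecMul, dotProduct, Finset.sum_apply]
    rw [this]
    exact Submodule.sum_mem _ fun i _ => Submodule.smul_mem _ _
      (Submodule.subset_span ⟨i, rfl⟩)

lemma finrank_range_liftMap (A : Matrix (Fin k) (Fin r) F) :
    finrank F ↥(LinearMap.range (liftMap A)) = k := by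
  rw [LinearMap.finrank_range_of_inj (liftMap_injective A)]
  simp

lemma inf_range_liftMap (A B : Matrix (Fin k) (Fin r) F) :
    LinearMap.range (liftMap A) ⊓ LinearMap.range (liftMap B) =
      Submodule.map (liftMap A) (LinearMap.ker (A - B).vecMulLinear) := by
  ext y
  constructor
  · rintro ⟨⟨x, rfl⟩, ⟨z, hz⟩⟩
    have hxz : x = z := by
      funext i; exact (congrFun hz (Sum.inl i)).symm
    subst hxz
    refine ⟨x, ?_, rfl⟩
    have : x ᵥ* A = x ᵥ* B := by
      funext j; exact (congrFun hz (Sum.inr j)).symm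
    show x ᵥ* (A - B) = 0
    rw [Matrix.vecMul_sub, sub_eq_zero]
    exact this
  · rintro ⟨x, hx, rfl⟩
    refine ⟨⟨x, rfl⟩, ⟨x, ?_⟩⟩
    have hx' : x ᵥ* (A - B) = 0 := hx
    rw [Matrix.vecMul_sub, sub_eq_zero] at hx'
    funext s; cases s with
    | inl i => rfl
    | inr j => exact (congrFun hx' j).symm

lemma finrank_ker_vecMulLinear [Fintype F] (M : Matrix (Fin k) (Fin r) F) :
    finrank F ↥(LinearMap.ker M.vecMulLinear) = k - M.rank := by
  have h := LinearMap.finrank_range_add_finrank_ker M.vecMulLinear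
  have hr : finrank F ↥(LinearMap.range M.vecMulLinear) = M.rank := by
    have : finrank F ↥(LinearMap.range M.vecMulLinear) = Mᵀ.rank := by
      rw [← Matrix.mulVecLin_transpose]; rfl
    rw [this, Matrix.rank_transpose]
  simp only [finrank_pi, Fintype.card_fin] at h
  omega

lemma finrank_inf_liftMap [Fintype F] (A B : Matrix (Fin k) (Fin r) F) :
    finrank F ↥(LinearMap.range (liftMap A) ⊓ LinearMap.range (liftMap B)) =
      k - (A - B).rank := by
  rw [inf_range_liftMap, ← finrank_ker_vecMulLinear]
  exact (Submodule.equivMapOfInjective _ (liftMap_injective A) _).symm.finrank_eq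

end Aux

/-- Lifted MRD codes are constant dimension codes: lifting A ∈ C to the row space of
(I_k | A) is injective, each lift is k-dimensional, and the minimum subspace distance
is exactly 2δ. -/
theorem stmt19 {F : Type*} [Field F] [Fintype F] [DecidableEq F] {k r δ : ℕ}
    (C : Submodule F (Matrix (Fin k) (Fin r) F))
    (hmin : ∀ A ∈ C, A ≠ 0 → δ ≤ A.rank)
    (hex : ∃ A ∈ C, A ≠ 0 ∧ A.rank = δ) :
    let U : Matrix (Fin k) (Fin r) F → Submodule F (Fin k ⊕ Fin r → F) :=
      fun A => Submodule.span F (Set.range fun i : Fin k =>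
        Sum.elim (fun j => if i = j then (1 : F) else 0) (fun j => A i j))
    Set.InjOn U (C : Set (Matrix (Fin k) (Fin r) F)) ∧
    (∀ A ∈ C, Module.finrank F ↥(U A) = k) ∧
    (∀ A ∈ C, ∀ B ∈ C, A ≠ B →
      2 * δ ≤ Module.finrank F ↥(U A) + Module.finrank F ↥(U B)
        - 2 * Module.finrank F ↥(U A ⊓ U B)) ∧
    (∃ A ∈ C, ∃ B ∈ C, A ≠ B ∧
      Module.finrank F ↥(U A) + Module.finrank F ↥(U B)
        - 2 * Module.finrank F ↥(U A ⊓ U B) = 2 * δ) := by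
  intro U
  have hU : ∀ A : Matrix (Fin k) (Fin r) F, U A = LinearMap.range (liftMap A) :=
    fun A => span_eq_range_liftMap A
  have hdim : ∀ A : Matrix (Fin k) (Fin r) F, finrank F ↥(U A) = k := by
    intro A; rw [hU]; exact finrank_range_liftMap A
  have hinf : ∀ A B : Matrix (Fin k) (Fin r) F,
      finrank F ↥(U A ⊓ U B) = k - (A - B).rank := by
    intro A B; rw [hU, hU]; exact finrank_inf_liftMap A B
  have hrank_le : ∀ M : Matrix (Fin k) (Fin r) F, M.rank ≤ k := Matrix.rank_le_height
  refine ⟨?_, fun A _ => hdim A, ?_, ?_⟩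
  · intro A hA B hB hAB
    funext i j
    have hmem : (Sum.elim (fun j => if i = j then (1 : F) else 0)
        (fun j => A i j) : Fin k ⊕ Fin r → F) ∈ U B := by
      rw [← hAB]; exact Submodule.subset_span ⟨i, rfl⟩
    rw [hU] at hmem
    obtain ⟨x, hx⟩ := hmem
    have hxe : x = Pi.single i 1 := by
      funext l
      have h := congrFun hx (Sum.inl l)
      simp only [liftMap, LinearMap.coe_mk, AddHom.coe_mk, Sum.elim_inl] at h
      simp [Pi.single_apply, h, eq_comm]
    have h := congrFun hx (Sum.inr j)
    simp only [liftMap, LinearMap.coe_mk, AddHom.coe_mk, Sum.elim_inr, hxe,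
      Matrix.single_one_vecMul] at h
    exact h.symm
  · intro A hA B hB hAB
    have hsub : A - B ∈ C := C.sub_mem hA hB
    have h1 : δ ≤ (A - B).rank := hmin _ hsub (sub_ne_zero.mpr hAB)
    have h2 := hinf A B
    have h3 := hdim A
    have h4 := hdim B
    have h5 := hrank_le (A - B)
    omega
  · obtain ⟨A, hA, hA0, hAr⟩ := hex
    refine ⟨A, hA, 0, C.zero_mem, hA0, ?_⟩
    have h2 := hinf A 0
    have h3 := hdim A
    have h4 := hdim 0
    have h5 := hrank_le (A - 0)
    rw [sub_zero] at h2 h5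
    omega
end
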